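/- arXiv:1502.07191 — 7 statements merged into one kernel-verified Lean document; each statement's English description precedes it below -/
import Mathlib

section
/- Fix α ∈ ℂ, a nonzero scalar L ∈ ℂ, and an invertible matrix P ∈ GL₂(ℂ). For k ≥ 1 define Δ_k := ((α,k−1)/(2L)^k)·P·A_k·P⁻¹, and define (s_m)_{m≥1} recursively by s_m = Δ_m − ∑_{j=1}^{m−1} s_j·Δ_{m−j}. Then s_m = Δ_m whenever m is odd, and s_m = Δ_m − ((4α² + 2m − 1)/L^m)·((α,m−1)/(2^{m+1} m))·I whenever m is even, where I is the 2×2 identity matrix. -/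
/-- The bracket symbol `(α, m) = (∏_{n=1}^m (4α² - (2n-1)²)) / (2^{2m} m!)`. -/
noncomputable def jbracket (α : ℂ) (m : ℕ) : ℂ :=
  (∏ n ∈ Finset.Icc 1 m, (4 * α ^ 2 - (2 * (n : ℂ) - 1) ^ 2)) / (2 ^ (2 * m) * m.factorial)

/-- The matrix `A_k` from the jump coefficients. -/
noncomputable def Amat (α : ℂ) (k : ℕ) : Matrix (Fin 2) (Fin 2) ℂ :=
  !![(-1) ^ k * (α ^ 2 + (k : ℂ) / 2 - 1 / 4) / (k : ℂ), -Complex.I * ((k : ℂ) - 1 / 2);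
     (-1) ^ k * ((k : ℂ) - 1 / 2) * Complex.I, (α ^ 2 + (k : ℂ) / 2 - 1 / 4) / (k : ℂ)]

/-!
With `Δ(X) = ∑ Δ_k X^k` and `s(X) = ∑ s_k X^k`, the recursion says `s (1 + Δ) = Δ`. Up to
conjugation by `P` and the rescaling `X ↦ X / (2L)`, the determinant of `1 + Δ(X)` is
`J(X) J(-X) + X (θJ(X) J(-X) - J(X) θJ(-X))`, where `J(X) = ∑ (α,k) X^k` and `θ = X d/dX`.
The recursion of the bracket symbols is the differential equation `J' + θ²J + θJ = (α² - 1/4) J`,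
and together with its reflection `X ↦ -X` it shows that `θ` kills this Wronskian-type expression,
which therefore equals its constant term `1`. For a 2×2 matrix with `det (1 + Δ) = 1`,
Cayley–Hamilton gives `Δ² = tr Δ • (1 + Δ)`, hence `s = Δ - tr Δ • 1`; and
`tr Δ_m = (α,m-1) / (2L)^m • tr A_m` vanishes for odd `m` and is the stated scalar for even `m`.
-/

open PowerSeries Finset

namespace PowerSeries

variable {R : Type*} [CommRing R]

noncomputable def eulerOp (f : R⟦X⟧) : R⟦X⟧ := X * d⁄dX R f

theorem coeff_eulerOp (f : R⟦X⟧) (n : ℕ) : coeff n (eulerOp f) = n * coeff n f := by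
  rcases n with _ | n
  · simp [eulerOp]
  · rw [eulerOp, coeff_succ_X_mul, coeff_derivative, mul_comm]; push_cast; rfl

theorem derivative_rescale (a : R) (f : R⟦X⟧) :
    d⁄dX R (rescale a f) = C a * rescale a (d⁄dX R f) := by
  ext n
  simp only [coeff_derivative, coeff_rescale, coeff_C_mul, pow_succ]; ring

theorem eulerOp_rescale (a : R) (f : R⟦X⟧) : eulerOp (rescale a f) = rescale a (eulerOp f) := by
  ext n
  simp only [coeff_eulerOp, coeff_rescale]; ring

theorem rescale_C (a c : R) : rescale a (C c) = C c := by
  ext n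
  rw [coeff_rescale, coeff_C]
  split_ifs with h <;> simp [h]

theorem constantCoeff_rescale (a : R) (f : R⟦X⟧) :
    constantCoeff (rescale a f) = constantCoeff f := by
  rw [← coeff_zero_eq_constantCoeff_apply, coeff_rescale, pow_zero, one_mul,
    coeff_zero_eq_constantCoeff_apply]

end PowerSeries

namespace Matrix

variable {n R : Type*} [CommRing R]

theorem map_coeff_mul [Fintype n] (M N : Matrix n n R⟦X⟧) (k : ℕ) :
    (M * N).map (coeff k) = ∑ p ∈ antidiagonal k, M.map (coeff p.1) * N.map (coeff p.2) := by
  ext i j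
  simp only [map_apply, mul_apply, map_sum, coeff_mul, Matrix.sum_apply]
  exact Finset.sum_comm

theorem map_coeff_C_mul_mul_C [Fintype n] (A B : Matrix n n R) (M : Matrix n n R⟦X⟧) (k : ℕ) :
    (A.map C * M * B.map C).map (coeff k) = A * M.map (coeff k) * B := by
  ext i j
  simp [mul_apply, map_sum, Finset.sum_mul]

theorem map_coeff_map_rescale (a : R) (M : Matrix n n R⟦X⟧) (k : ℕ) :
    (M.map (rescale a)).map (coeff k) = a ^ k • M.map (coeff k) := by
  ext i j
  simp [coeff_rescale]

theorem map_coeff_trace_smul_one [Fintype n] [DecidableEq n] (M : Matrix n n R⟦X⟧) (k : ℕ) :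
    (M.trace • (1 : Matrix n n R⟦X⟧)).map (coeff k) = (M.map (coeff k)).trace • 1 := by
  ext i j
  by_cases h : i = j <;> simp [h, trace]

theorem sub_trace_smul_mul_one_add_fin_two (D : Matrix (Fin 2) (Fin 2) R) (h : det (1 + D) = 1) :
    (D - D.trace • 1) * (1 + D) = D := by
  rw [det_fin_two] at h
  ext i j
  fin_cases i <;> fin_cases j <;>
    simp only [mul_apply, Fin.sum_univ_two, trace_fin_two, add_apply, sub_apply, smul_apply,
      smul_eq_mul, one_fin_two, of_apply, cons_val', cons_val_zero, cons_val_one, empty_val',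
      cons_val_fin_one, Fin.isValue, Fin.zero_eta, Fin.mk_one] at h ⊢
  · linear_combination -h
  · ring
  · ring
  · linear_combination -h

theorem map_coeff_eq_sub_sum_of_mul_one_add_eq [Fintype n] [DecidableEq n] {D S : Matrix n n R⟦X⟧}
    (hD : D.map (coeff 0) = 0) (hSD : S * (1 + D) = D) {m : ℕ} (hm : 1 ≤ m) :
    S.map (coeff m) = D.map (coeff m) -
      ∑ j ∈ Icc 1 (m - 1), S.map (coeff j) * D.map (coeff (m - j)) := by
  have hcoeff : ∀ k, S.map (coeff k) + ∑ p ∈ antidiagonal k,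
      S.map (coeff p.1) * D.map (coeff p.2) = D.map (coeff k) := fun k => by
    rw [← map_coeff_mul, ← Matrix.map_add _ (map_add _), ← mul_one_add, hSD]
  have hS : S.map (coeff 0) = 0 := by
    simpa only [Nat.antidiagonal_zero, sum_singleton, hD, Matrix.mul_zero, add_zero] using hcoeff 0
  rw [eq_sub_iff_add_eq, ← hcoeff m, Nat.sum_antidiagonal_eq_sum_range_succ
    (fun i j => S.map (coeff i) * D.map (coeff j)), sum_range_succ, range_eq_Ico,
    sum_eq_sum_Ico_succ_bot (by omega), hS, Nat.sub_self, hD, Matrix.zero_mul, Matrix.mul_zero,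
    zero_add, add_zero, zero_add]
  rw [show Ico 1 m = Icc 1 (m - 1) by ext j; simp only [mem_Icc, mem_Ico]; omega]

theorem eq_map_coeff_of_mul_one_add_eq [Fintype n] [DecidableEq n] {D S : Matrix n n R⟦X⟧}
    (hD : D.map (coeff 0) = 0) (hSD : S * (1 + D) = D) {Δ s : ℕ → Matrix n n R}
    (hΔ : ∀ k, 1 ≤ k → Δ k = D.map (coeff k))
    (hs : ∀ m, 1 ≤ m → s m = Δ m - ∑ j ∈ Icc 1 (m - 1), s j * Δ (m - j)) :
    ∀ m, 1 ≤ m → s m = S.map (coeff m) := by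
  intro m
  induction m using Nat.strong_induction_on with
  | _ m ih =>
    intro hm
    rw [hs m hm, map_coeff_eq_sub_sum_of_mul_one_add_eq hD hSD hm, hΔ m hm]
    congr 1
    refine sum_congr rfl fun j hj => ?_
    rw [mem_Icc] at hj
    rw [ih j (by omega) hj.1, hΔ (m - j) (by omega)]

theorem det_one_add_map_mul_mul_map [Fintype n] [DecidableEq n] {S : Type*} [CommRing S]
    (f : R →+* S) {A B : Matrix n n R} (hBA : B * A = 1) (M : Matrix n n S) :
    (1 + A.map f * M * B.map f).det = (1 + M).det := by
  rw [det_one_add_mul_comm, ← Matrix.mul_assoc, ← Matrix.map_mul, hBA,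
    Matrix.map_one f f.map_zero f.map_one, Matrix.one_mul]

end Matrix

theorem jbracket_zero (α : ℂ) : jbracket α 0 = 1 := by simp [jbracket]

theorem jbracket_succ (α : ℂ) (t : ℕ) :
    4 * ((t : ℂ) + 1) * jbracket α (t + 1) = (4 * α ^ 2 - (2 * t + 1) ^ 2) * jbracket α t := by
  have h2 : (2 : ℂ) ^ (2 * t) ≠ 0 := pow_ne_zero _ two_ne_zero
  have h3 : (t.factorial : ℂ) ≠ 0 := Nat.cast_ne_zero.mpr t.factorial_ne_zero
  have h4 : (t : ℂ) + 1 ≠ 0 := by exact_mod_cast t.succ_ne_zero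
  rw [jbracket, jbracket, Finset.prod_Icc_succ_top (Nat.le_add_left 1 t), Nat.factorial_succ]
  push_cast
  rw [pow_succ, pow_succ]
  field_simp
  ring

noncomputable def jbracketSeries (α : ℂ) : ℂ⟦X⟧ := mk (jbracket α)

theorem constantCoeff_jbracketSeries (α : ℂ) : constantCoeff (jbracketSeries α) = 1 := by
  rw [← coeff_zero_eq_constantCoeff_apply, jbracketSeries, coeff_mk, jbracket_zero]

theorem jbracketSeries_ode (α : ℂ) :
    d⁄dX ℂ (jbracketSeries α) + eulerOp (eulerOp (jbracketSeries α)) + eulerOp (jbracketSeries α)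
      = C (α ^ 2 - 1 / 4) * jbracketSeries α := by
  ext n
  simp only [coeff_C_mul, map_add, coeff_derivative, coeff_eulerOp, jbracketSeries, coeff_mk]
  linear_combination jbracket_succ α n / 4

theorem jbracketSeries_ode_neg (α : ℂ) :
    -d⁄dX ℂ (evalNegHom (jbracketSeries α)) + eulerOp (eulerOp (evalNegHom (jbracketSeries α)))
        + eulerOp (evalNegHom (jbracketSeries α))
      = C (α ^ 2 - 1 / 4) * evalNegHom (jbracketSeries α) := by
  have h := congrArg evalNegHom (jbracketSeries_ode α)
  have hd := derivative_rescale (-1 : ℂ) (jbracketSeries α)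
  simp only [evalNegHom, map_mul, map_add, ← eulerOp_rescale, rescale_C] at h ⊢
  rw [hd, map_neg, map_one]
  linear_combination h

theorem jbracketSeries_wronskian (α : ℂ) :
    jbracketSeries α * evalNegHom (jbracketSeries α) + X * (eulerOp (jbracketSeries α) *
      evalNegHom (jbracketSeries α) - jbracketSeries α * eulerOp (evalNegHom (jbracketSeries α)))
      = 1 := by
  set J := jbracketSeries α
  set K := evalNegHom J
  have hJ := jbracketSeries_ode α
  have hK := jbracketSeries_ode_neg α
  have hθ : eulerOp (J * K + X * (eulerOp J * K - J * eulerOp K)) = 0 := by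
    simp only [eulerOp, Derivation.leibniz, map_add, map_sub, derivative_X, smul_eq_mul] at hJ hK ⊢
    linear_combination (X * K) * hJ - (X * J) * hK
  refine derivative.ext ?_ ?_
  · rw [derivative_one]
    exact (mul_eq_zero.mp hθ).resolve_left X_ne_zero
  · have hJ0 : constantCoeff J = 1 := constantCoeff_jbracketSeries α
    have hK0 : constantCoeff K = 1 := (constantCoeff_rescale _ J).trans hJ0
    simp only [map_add, map_mul, constantCoeff_X, hJ0, hK0, map_one]
    ring

noncomputable def besselOffDiag (α : ℂ) : ℂ⟦X⟧ :=
  X * (eulerOp (jbracketSeries α) + C (1 / 2) * jbracketSeries α)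

noncomputable def besselDiag (α : ℂ) : ℂ⟦X⟧ := jbracketSeries α - 1 + besselOffDiag α

theorem coeff_succ_besselOffDiag (α : ℂ) (k : ℕ) :
    coeff (k + 1) (besselOffDiag α) = ((k + 1 : ℕ) - 1 / 2 : ℂ) * jbracket α k := by
  simp only [besselOffDiag, jbracketSeries, coeff_succ_X_mul, map_add, coeff_eulerOp, coeff_mk,
    coeff_C_mul]
  push_cast
  ring

theorem coeff_succ_besselDiag (α : ℂ) (k : ℕ) :
    coeff (k + 1) (besselDiag α)
      = jbracket α k * ((α ^ 2 + ((k + 1 : ℕ) : ℂ) / 2 - 1 / 4) / ((k + 1 : ℕ) : ℂ)) := by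
  have hk : ((k + 1 : ℕ) : ℂ) ≠ 0 := Nat.cast_ne_zero.mpr k.succ_ne_zero
  rw [besselDiag, map_add, map_sub, coeff_succ_besselOffDiag]
  simp only [jbracketSeries, coeff_mk, coeff_one, k.succ_ne_zero, if_false, sub_zero]
  field_simp
  push_cast
  linear_combination 2 * jbracket_succ α k

-- `Amat α 0` is not zero (its off-diagonal entries are `± i/2`), hence the explicit constant term.
noncomputable def besselMatrixSeries (α : ℂ) : Matrix (Fin 2) (Fin 2) ℂ⟦X⟧ :=
  Matrix.of fun i j => mk fun k => if k = 0 then 0 else (jbracket α (k - 1) • Amat α k) i j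

theorem map_coeff_besselMatrixSeries (α : ℂ) (k : ℕ) :
    (besselMatrixSeries α).map (coeff k) = if k = 0 then 0 else jbracket α (k - 1) • Amat α k := by
  ext i j
  split_ifs with hk <;> simp [besselMatrixSeries, hk]

theorem besselMatrixSeries_eq (α : ℂ) : besselMatrixSeries α =
    !![evalNegHom (besselDiag α), -(C Complex.I * besselOffDiag α);
      C Complex.I * evalNegHom (besselOffDiag α), besselDiag α] := by
  ext i j k
  rcases k with _ | k
  · fin_cases i <;> fin_cases j <;> simp [besselMatrixSeries, besselDiag, besselOffDiag,
      evalNegHom, constantCoeff_rescale, constantCoeff_jbracketSeries]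
  · fin_cases i <;> fin_cases j <;>
      simp only [besselMatrixSeries, Amat, Matrix.smul_apply, Matrix.of_apply, Matrix.cons_val',
        Matrix.cons_val_fin_one, Matrix.cons_val_zero, Matrix.cons_val_one, Fin.isValue,
        Fin.zero_eta, Fin.mk_one, smul_eq_mul, coeff_mk, Nat.succ_ne_zero, if_false,
        Nat.add_sub_cancel, evalNegHom, map_neg, coeff_C_mul, coeff_rescale, coeff_succ_besselDiag,
        coeff_succ_besselOffDiag] <;> ring

theorem det_one_add_besselMatrixSeries (α : ℂ) : (1 + besselMatrixSeries α).det = 1 := by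
  rw [besselMatrixSeries_eq, Matrix.det_fin_two]
  simp only [Matrix.add_apply, Matrix.one_fin_two, Matrix.of_apply, Matrix.cons_val',
    Matrix.cons_val_zero, Matrix.cons_val_one, Matrix.empty_val', Matrix.cons_val_fin_one,
    besselDiag, map_add, map_sub, map_one]
  set J := jbracketSeries α
  set K := evalNegHom J
  have hV : besselOffDiag α = X * (eulerOp J + C (1 / 2) * J) := rfl
  have hVneg : evalNegHom (besselOffDiag α) = -X * (eulerOp K + C (1 / 2) * K) := by
    simp only [hV, K, evalNegHom, map_mul, map_add, rescale_neg_one_X, eulerOp_rescale, rescale_C]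
  have hI : C Complex.I * C Complex.I = (-1 : ℂ⟦X⟧) := by
    rw [← map_mul, Complex.I_mul_I, map_neg, map_one]
  rw [hVneg, hV]
  linear_combination jbracketSeries_wronskian α
    - X * (eulerOp K + C (1 / 2) * K) * (X * (eulerOp J + C (1 / 2) * J)) * hI

theorem trace_Amat (α : ℂ) (k : ℕ) :
    (Amat α k).trace = (1 + (-1) ^ k) * ((α ^ 2 + (k : ℂ) / 2 - 1 / 4) / k) := by
  rw [Matrix.trace_fin_two, Amat]
  simp only [Matrix.of_apply, Matrix.cons_val', Matrix.cons_val_zero, Matrix.cons_val_one,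
    Matrix.empty_val', Matrix.cons_val_fin_one]
  ring

theorem eq_sub_trace_smul_one_of_recursion {α L : ℂ} {P : Matrix (Fin 2) (Fin 2) ℂ} (hP : IsUnit P)
    {Δ s : ℕ → Matrix (Fin 2) (Fin 2) ℂ}
    (hΔ : ∀ k, 1 ≤ k → Δ k = (jbracket α (k - 1) / (2 * L) ^ k) • (P * Amat α k * P⁻¹))
    (hs : ∀ m, 1 ≤ m → s m = Δ m - ∑ j ∈ Icc 1 (m - 1), s j * Δ (m - j)) :
    ∀ m, 1 ≤ m → s m = Δ m - (Δ m).trace • 1 := by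
  have hPP : P⁻¹ * P = 1 := Matrix.nonsing_inv_mul P ((Matrix.isUnit_iff_isUnit_det P).mp hP)
  set D := P.map C * (besselMatrixSeries α).map (rescale (2 * L)⁻¹) * P⁻¹.map C
  have hD : ∀ k, D.map (coeff k) =
      if k = 0 then 0 else (jbracket α (k - 1) / (2 * L) ^ k) • (P * Amat α k * P⁻¹) := by
    intro k
    rw [Matrix.map_coeff_C_mul_mul_C, Matrix.map_coeff_map_rescale, map_coeff_besselMatrixSeries]
    split_ifs
    · simp
    · rw [smul_smul, Matrix.mul_smul, Matrix.smul_mul, inv_pow, div_eq_mul_inv, mul_comm]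
  have hdet : (1 + D).det = 1 := by
    rw [Matrix.det_one_add_map_mul_mul_map C hPP, ← RingHom.mapMatrix_apply,
      ← map_one (rescale (2 * L)⁻¹).mapMatrix, ← map_add, ← RingHom.map_det,
      det_one_add_besselMatrixSeries, map_one]
  have hS := Matrix.eq_map_coeff_of_mul_one_add_eq (by simpa using hD 0)
    (Matrix.sub_trace_smul_mul_one_add_fin_two D hdet)
    (fun k hk => by rw [hD, if_neg (by omega), hΔ k hk]) hs
  intro m hm
  rw [hS m hm, Matrix.map_sub _ (map_sub _), Matrix.map_coeff_trace_smul_one, hD, if_neg (by omega),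
    hΔ m hm]

theorem s_eq_Delta_simplification_general (α L : ℂ)
    (P : Matrix (Fin 2) (Fin 2) ℂ) (hP : IsUnit P)
    (Δ s : ℕ → Matrix (Fin 2) (Fin 2) ℂ)
    (hΔ : ∀ k, 1 ≤ k → Δ k = (jbracket α (k - 1) / (2 * L) ^ k) • (P * Amat α k * P⁻¹))
    (hs : ∀ m, 1 ≤ m → s m = Δ m - ∑ j ∈ Finset.Icc 1 (m - 1), s j * Δ (m - j)) :
    ∀ m, 1 ≤ m →
      (Odd m → s m = Δ m) ∧
      (Even m → s m = Δ m -
        (((4 * α ^ 2 + 2 * (m : ℂ) - 1) / L ^ m) * (jbracket α (m - 1) / (2 ^ (m + 1) * (m : ℂ))))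
          • (1 : Matrix (Fin 2) (Fin 2) ℂ)) := by
  intro m hm
  rw [eq_sub_trace_smul_one_of_recursion hP hΔ hs m hm, hΔ m hm, Matrix.trace_smul,
    Matrix.trace_conj hP, trace_Amat, smul_eq_mul]
  refine ⟨fun hodd => by simp [hodd.neg_one_pow], fun heven => ?_⟩
  rw [heven.neg_one_pow, mul_pow]
  congr 2
  ring

/-- with `Δ_k = ((α,k-1)/(2L)^k) • P A_k P⁻¹` and `s` defined by the recursion
`s m = Δ m - ∑_{j=1}^{m-1} s j Δ (m-j)`, one has `s m = Δ m` for odd `m`, and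
`s m = Δ m - ((4α²+2m-1)/L^m)·((α,m-1)/(2^{m+1} m)) • I` for even `m`. -/
theorem s_eq_Delta_simplification (α L : ℂ) (hL : L ≠ 0)
    (P : Matrix (Fin 2) (Fin 2) ℂ) (hP : IsUnit P)
    (Δ s : ℕ → Matrix (Fin 2) (Fin 2) ℂ)
    (hΔ : ∀ k, 1 ≤ k → Δ k = (jbracket α (k - 1) / (2 * L) ^ k) • (P * Amat α k * P⁻¹))
    (hs : ∀ m, 1 ≤ m → s m = Δ m - ∑ j ∈ Finset.Icc 1 (m - 1), s j * Δ (m - j)) :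
    ∀ m, 1 ≤ m →
      (Odd m → s m = Δ m) ∧
      (Even m → s m = Δ m -
        (((4 * α ^ 2 + 2 * (m : ℂ) - 1) / L ^ m) * (jbracket α (m - 1) / (2 ^ (m + 1) * (m : ℂ))))
          • (1 : Matrix (Fin 2) (Fin 2) ℂ)) :=
  s_eq_Delta_simplification_general α L P hP Δ s hΔ hs
end

section
/- The function z ↦ (z−1)^{1/2}·(z+1)^{1/2}, where each factor is the principal complex square root, is holomorphic on ℂ ∖ [−1,1]; consequently φ(z) := z + (z−1)^{1/2}(z+1)^{1/2} is holomorphic on ℂ ∖ [−1,1]. (In contrast, the principal branch of (z²−1)^{1/2} has an additional spurious branch cut on the imaginary axis.) -/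
/-!
Where `z - 1` and `z + 1` both avoid the cut `(-∞, 0]`, the two principal square roots are
holomorphic. The only other points off `[-1, 1]` are the reals `z < -1`. Near such a point,
write `w - 1 = -(1 - w)` and `w + 1 = -(-1 - w)`: both `1 - w` and `-1 - w` lie in the same
half-plane, so `log` jumps by the same `θ = ±π` on negating either of them, and the two square
roots pick up the same factor `exp (θ i / 2)`, whose square is `-1`. Hence the product agrees
near `z` with `-(1 - w)^{1/2} (-1 - w)^{1/2}`, which is holomorphic there.
-/

open Complex Filter Topology
open scoped Real

def intervalCC : Set ℂ := Complex.ofReal '' Set.Icc (-1 : ℝ) 1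

lemma mem_intervalCC_iff {z : ℂ} : z ∈ intervalCC ↔ z.im = 0 ∧ -1 ≤ z.re ∧ z.re ≤ 1 := by
  constructor
  · rintro ⟨x, hx, rfl⟩
    simpa using hx
  · rintro ⟨him, hre⟩
    exact ⟨z.re, hre, Complex.ext (by simp) (by simp [him])⟩

namespace Complex

lemma log_neg_of_arg_neg_eq {x : ℂ} {θ : ℝ} (h : arg (-x) = arg x + θ) :
    log (-x) = log x + θ * I := by
  rw [log, log, h, norm_neg]
  push_cast
  ring

lemma neg_cpow_of_arg_neg_eq {x : ℂ} (hx : x ≠ 0) {θ : ℝ} (h : arg (-x) = arg x + θ) (s : ℂ) :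
    (-x) ^ s = exp (θ * I * s) * x ^ s := by
  rw [cpow_def_of_ne_zero (neg_ne_zero.2 hx), cpow_def_of_ne_zero hx, log_neg_of_arg_neg_eq h,
    add_mul, exp_add, mul_comm]

lemma neg_cpow_half_mul_neg_cpow_half {a b : ℂ} {θ : ℝ} (hθ : θ = π ∨ θ = -π)
    (ha : arg (-a) = arg a + θ) (hb : arg (-b) = arg b + θ) :
    (-a) ^ (1 / 2 : ℂ) * (-b) ^ (1 / 2 : ℂ) = -(a ^ (1 / 2 : ℂ) * b ^ (1 / 2 : ℂ)) := by
  have ne_zero {x : ℂ} (hx : arg (-x) = arg x + θ) : x ≠ 0 := by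
    rintro rfl
    have hθ₀ : θ = 0 := by simpa [eq_comm] using hx
    rcases hθ with rfl | rfl <;> simp [Real.pi_ne_zero] at hθ₀
  have hexp : exp (θ * I * (1 / 2)) * exp (θ * I * (1 / 2)) = -1 := by
    rw [← exp_add, show θ * I * (1 / 2) + θ * I * (1 / 2) = θ * I by ring]
    rcases hθ with rfl | rfl
    · exact exp_pi_mul_I
    · rw [ofReal_neg, neg_mul, exp_neg, exp_pi_mul_I]
      norm_num
  rw [neg_cpow_of_arg_neg_eq (ne_zero ha) ha, neg_cpow_of_arg_neg_eq (ne_zero hb) hb]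
  linear_combination (a ^ (1 / 2 : ℂ) * b ^ (1 / 2 : ℂ)) * hexp

lemma sub_one_cpow_half_mul_add_one_cpow_half {w : ℂ} (hw : w.im ≠ 0 ∨ w.re < -1) :
    (w - 1) ^ (1 / 2 : ℂ) * (w + 1) ^ (1 / 2 : ℂ) =
      -((1 - w) ^ (1 / 2 : ℂ) * (-1 - w) ^ (1 / 2 : ℂ)) := by
  rw [show w - 1 = -(1 - w) by ring, show w + 1 = -(-1 - w) by ring]
  rcases lt_trichotomy w.im 0 with him | him | him
  · refine neg_cpow_half_mul_neg_cpow_half (Or.inr rfl) ?_ ?_ <;>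
      rw [arg_neg_eq_arg_sub_pi_of_im_pos (by simpa using him), sub_eq_add_neg]
  · have hre : w.re < -1 := hw.resolve_left (not_not.2 him)
    refine neg_cpow_half_mul_neg_cpow_half (Or.inl rfl) ?_ ?_ <;>
      exact arg_neg_eq_arg_add_pi_iff.2 (Or.inr ⟨by simp [him], by simp only [sub_re, one_re, neg_re]; linarith⟩)
  · refine neg_cpow_half_mul_neg_cpow_half (Or.inl rfl) ?_ ?_ <;>
      exact arg_neg_eq_arg_add_pi_of_im_neg (by simpa using him)

end Complex

lemma differentiableAt_sub_one_cpow_half_mul_add_one_cpow_half {z : ℂ} (hz : z ∉ intervalCC) :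
    DifferentiableAt ℂ (fun w : ℂ => (w - 1) ^ (1 / 2 : ℂ) * (w + 1) ^ (1 / 2 : ℂ)) z := by
  rw [mem_intervalCC_iff] at hz
  by_cases hslit : z.im ≠ 0 ∨ 1 < z.re
  · have h₁ : z - 1 ∈ slitPlane := by
      rw [mem_slitPlane_iff]; simp only [sub_re, one_re, sub_im, one_im]; grind
    have h₂ : z + 1 ∈ slitPlane := by
      rw [mem_slitPlane_iff]; simp only [add_re, one_re, add_im, one_im]; grind
    exact ((differentiableAt_id.sub_const 1).cpow_const h₁).mul
      ((differentiableAt_id.add_const 1).cpow_const h₂)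
  · have hre : z.re < -1 := by grind
    have h₁ : 1 - z ∈ slitPlane := by
      rw [mem_slitPlane_iff]; simp only [sub_re, one_re]; grind
    have h₂ : -1 - z ∈ slitPlane := by
      rw [mem_slitPlane_iff]; simp only [sub_re, neg_re, one_re]; grind
    have hmirror : (fun w : ℂ => -((1 - w) ^ (1 / 2 : ℂ) * (-1 - w) ^ (1 / 2 : ℂ))) =ᶠ[𝓝 z]
        fun w : ℂ => (w - 1) ^ (1 / 2 : ℂ) * (w + 1) ^ (1 / 2 : ℂ) := by
      filter_upwards [(isOpen_Iio.preimage continuous_re).mem_nhds hre] with w hw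
      exact (sub_one_cpow_half_mul_add_one_cpow_half (Or.inr hw)).symm
    refine DifferentiableAt.congr_of_eventuallyEq ?_ hmirror.symm
    exact ((((differentiableAt_const 1).sub differentiableAt_id).cpow_const h₁).mul
      (((differentiableAt_const (-1)).sub differentiableAt_id).cpow_const h₂)).neg

/-- `z ↦ (z-1)^{1/2} (z+1)^{1/2}` (principal square roots) is holomorphic on
`ℂ ∖ [-1,1]`, and consequently so is `φ(z) = z + (z-1)^{1/2}(z+1)^{1/2}`. -/
theorem sqrt_product_holomorphic :
    DifferentiableOn ℂ
        (fun z : ℂ => (z - 1) ^ (1 / 2 : ℂ) * (z + 1) ^ (1 / 2 : ℂ)) intervalCCᶜ ∧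
      DifferentiableOn ℂ
        (fun z : ℂ => z + (z - 1) ^ (1 / 2 : ℂ) * (z + 1) ^ (1 / 2 : ℂ)) intervalCCᶜ := by
  have hprod : DifferentiableOn ℂ
      (fun z : ℂ => (z - 1) ^ (1 / 2 : ℂ) * (z + 1) ^ (1 / 2 : ℂ)) intervalCCᶜ :=
    fun _ hz =>
      (differentiableAt_sub_one_cpow_half_mul_add_one_cpow_half hz).differentiableWithinAt
  exact ⟨hprod, differentiableOn_id.add hprod⟩
end

section
/- For every z ∈ ℂ ∖ [−1,1], one has |z + (z−1)^{1/2}(z+1)^{1/2}| > 1, where each square root is the principal complex square root. That is, the function φ(z) = z + (z−1)^{1/2}(z+1)^{1/2} maps ℂ ∖ [−1,1] into the exterior of the closed unit disk. -/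
open Complex ComplexConjugate

lemma intervalCC_eq_segment : intervalCC = segment ℝ (-1 : ℂ) 1 := by
  rw [intervalCC, ← segment_eq_Icc (by norm_num)]
  simpa using image_segment ℝ ofRealCLM.toLinearMap.toAffineMap (-1) 1

lemma two_lt_norm_sub_one_add_norm_add_one {z : ℂ} (hz : z ∉ intervalCC) :
    2 < ‖z - 1‖ + ‖z + 1‖ := by
  have hdist : dist (-1 : ℂ) z + dist z 1 = ‖z + 1‖ + ‖z - 1‖ := by
    rw [dist_comm, dist_eq_norm, dist_eq_norm, sub_neg_eq_add]
  have htri := dist_triangle (-1 : ℂ) z 1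
  have hne : dist (-1 : ℂ) z + dist z 1 ≠ dist (-1 : ℂ) 1 := by
    rw [Ne, dist_add_dist_eq_iff, ← mem_segment_iff_wbtw, ← intervalCC_eq_segment]
    exact hz
  have h2 : dist (-1 : ℂ) 1 = 2 := by norm_num [dist_eq_norm]
  linarith [lt_of_le_of_ne htri hne.symm]

lemma cpow_one_half_sq (w : ℂ) : (w ^ (1 / 2 : ℂ)) ^ 2 = w := by
  rw [one_div]; exact cpow_ofNat_inv_pow w 2

lemma re_cpow_one_half_nonneg (w : ℂ) : 0 ≤ (w ^ (1 / 2 : ℂ)).re := by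
  rw [one_div, cpow_inv_two_re]; exact Real.sqrt_nonneg _

lemma im_cpow_one_half_nonneg {w : ℂ} (hw : 0 ≤ w.im) : 0 ≤ (w ^ (1 / 2 : ℂ)).im := by
  rw [one_div, cpow_inv_two_im_eq_sqrt hw]; exact Real.sqrt_nonneg _

lemma im_cpow_one_half_nonpos {w : ℂ} (hw : w.im < 0) : (w ^ (1 / 2 : ℂ)).im ≤ 0 := by
  rw [one_div, cpow_inv_two_im_eq_neg_sqrt hw, neg_nonpos]; exact Real.sqrt_nonneg _

lemma re_cpow_one_half_mul_conj_nonneg {w₁ w₂ : ℂ} (h : w₁.im = w₂.im) :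
    0 ≤ (w₁ ^ (1 / 2 : ℂ) * conj (w₂ ^ (1 / 2 : ℂ))).re := by
  have hre := mul_nonneg (re_cpow_one_half_nonneg w₁) (re_cpow_one_half_nonneg w₂)
  have him : 0 ≤ (w₁ ^ (1 / 2 : ℂ)).im * (w₂ ^ (1 / 2 : ℂ)).im := by
    rcases le_or_gt 0 w₂.im with hw | hw
    · exact mul_nonneg (im_cpow_one_half_nonneg (h ▸ hw)) (im_cpow_one_half_nonneg hw)
    · exact mul_nonneg_of_nonpos_of_nonpos (im_cpow_one_half_nonpos (h ▸ hw))
        (im_cpow_one_half_nonpos hw)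
  simp only [mul_re, conj_re, conj_im, mul_neg, sub_neg_eq_add]
  positivity

lemma norm_add_norm_le_norm_cpow_one_half_add_sq {w₁ w₂ : ℂ} (h : w₁.im = w₂.im) :
    ‖w₁‖ + ‖w₂‖ ≤ ‖w₁ ^ (1 / 2 : ℂ) + w₂ ^ (1 / 2 : ℂ)‖ ^ 2 := by
  have hsq (w : ℂ) : normSq (w ^ (1 / 2 : ℂ)) = ‖w‖ := by
    rw [← Complex.sq_norm, ← norm_pow, cpow_one_half_sq]
  rw [Complex.sq_norm, normSq_add, hsq, hsq]
  linarith [re_cpow_one_half_mul_conj_nonneg h]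

/-- for `z ∉ [-1,1]`, `|z + (z-1)^{1/2}(z+1)^{1/2}| > 1`:
the conformal map `φ` sends `ℂ ∖ [-1,1]` into the exterior of the closed unit disk. -/
theorem phi_maps_to_exterior_unit_disk (z : ℂ) (hz : z ∉ intervalCC) :
    1 < ‖z + (z - 1) ^ (1 / 2 : ℂ) * (z + 1) ^ (1 / 2 : ℂ)‖ := by
  set u := (z - 1) ^ (1 / 2 : ℂ)
  set v := (z + 1) ^ (1 / 2 : ℂ)
  have hphi : z + u * v = (u + v) ^ 2 / 2 := by
    linear_combination (-(1 : ℂ) / 2) * (cpow_one_half_sq (z - 1) + cpow_one_half_sq (z + 1))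
  have hnorm := norm_add_norm_le_norm_cpow_one_half_add_sq (w₁ := z - 1) (w₂ := z + 1) (by simp)
  rw [hphi, norm_div, norm_pow, RCLike.norm_ofNat]
  linarith [two_lt_norm_sub_one_add_norm_add_one hz]
end

section
/- Let α, β be real numbers. For real x > 1 define φ(x) := x + √(x²−1), γ(x) := ((x−1)/(x+1))^{1/4}, F(x) := φ(x)^{(α+β)/2}, the 2×2 complex matrices M(x) := (1/2)·[[γ(x)+γ(x)⁻¹, −i(γ(x)−γ(x)⁻¹)], [i(γ(x)−γ(x)⁻¹), γ(x)+γ(x)⁻¹]], F(x)^{σ₃} := [[F(x), 0],[0, F(x)⁻¹]], and A₁ := [[−(α²+1/4), −i/2], [−i/2, α²+1/4]]. Then the limit as x → 1⁺ of ((x−1)/(2·log φ(x))) · M(x)·F(x)^{σ₃}·A₁·F(x)^{−σ₃}·M(x)⁻¹ exists and equals ((4α²−1)/16)·[[−1, i],[i, 1]]. -/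
/-!
Write `g = γ(x)` and `P(g) = 2g · M(g)`, a polynomial matrix with `det P(g) = 4g²`. Since
`det M(g) = 1`, `M(g)⁻¹ = adj M(g)`, hence `g² · M X M⁻¹ = ¼ · P(g) X adj P(g)` is continuous at
`g = 0`. On the scalar side `log φ(x) = arcosh x` and `γ(x)² √(x² - 1) = x - 1`, so the prefactor is
`γ(x)²` times `sinh t / (2t)` with `t = arcosh x → 0⁺`, which tends to `1/2`. As `F(x) → 1`, the
conjugation by `F^{σ₃}` disappears in the limit, leaving `⅛ · P(0) A₁ adj P(0)`.
-/

open Filter Topology Matrix Complex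

theorem Real.tendsto_sinh_div_self : Tendsto (fun t => Real.sinh t / t) (𝓝[≠] 0) (𝓝 1) := by
  have h := hasDerivAt_iff_tendsto_slope_zero.mp (Real.hasDerivAt_sinh 0)
  simp only [zero_add, Real.sinh_zero, sub_zero, Real.cosh_zero, smul_eq_mul] at h
  exact h.congr fun t => inv_mul_eq_div t _

theorem Real.tendsto_arcosh_nhdsGT_one : Tendsto Real.arcosh (𝓝[>] 1) (𝓝[>] 0) := by
  refine tendsto_nhdsWithin_iff.mpr
    ⟨?_, eventually_nhdsWithin_of_forall fun x hx => Real.arcosh_pos hx⟩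
  simpa using (Real.continuousOn_arcosh 1 Set.self_mem_Ici).mono_left
    (nhdsWithin_mono 1 Set.Ioi_subset_Ici_self)

theorem Real.tendsto_sqrt_sq_sub_one_div_arcosh :
    Tendsto (fun x => √(x ^ 2 - 1) / Real.arcosh x) (𝓝[>] 1) (𝓝 1) := by
  refine (Real.tendsto_sinh_div_self.comp (Real.tendsto_arcosh_nhdsGT_one.mono_right
    (nhdsWithin_mono 0 fun t ht => ne_of_gt ht))).congr' ?_
  filter_upwards [self_mem_nhdsWithin] with x hx
  simp [Real.sinh_arcosh (le_of_lt hx)]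

theorem rpow_one_fourth_sq_mul_sqrt_sq_sub_one {x : ℝ} (hx : 1 ≤ x) :
    (((x - 1) / (x + 1)) ^ (1 / 4 : ℝ)) ^ 2 * √(x ^ 2 - 1) = x - 1 := by
  have h0 : 0 ≤ (x - 1) / (x + 1) := div_nonneg (by linarith) (by linarith)
  rw [← Real.rpow_natCast, ← Real.rpow_mul h0, show (1 / 4 : ℝ) * (2 : ℕ) = 1 / 2 by norm_num,
    ← Real.sqrt_eq_rpow, ← Real.sqrt_mul h0,
    show (x - 1) / (x + 1) * (x ^ 2 - 1) = (x - 1) ^ 2 by field_simp; ring]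
  exact Real.sqrt_sq (by linarith)

theorem tendsto_rpow_one_fourth_nhdsGT_one :
    Tendsto (fun x : ℝ => ((x - 1) / (x + 1)) ^ (1 / 4 : ℝ)) (𝓝[>] 1) (𝓝 0) := by
  have h : ContinuousAt (fun x : ℝ => (x - 1) / (x + 1)) 1 := by fun_prop (disch := norm_num)
  simpa using (h.tendsto.mono_left nhdsWithin_le_nhds).rpow_const (p := 1 / 4) (by norm_num)

theorem tendsto_add_sqrt_sq_sub_one_rpow (p : ℝ) :
    Tendsto (fun x : ℝ => (x + √(x ^ 2 - 1)) ^ p) (𝓝 1) (𝓝 1) := by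
  have h : Tendsto (fun x : ℝ => x + √(x ^ 2 - 1)) (𝓝 1) (𝓝 1) := by
    simpa using (by fun_prop : Continuous fun x : ℝ => x + √(x ^ 2 - 1)).tendsto 1
  simpa using h.rpow_const (Or.inl one_ne_zero)

theorem tendsto_div_two_arcosh_div_rpow_one_fourth_sq :
    Tendsto (fun x => (x - 1) / (2 * Real.arcosh x) / (((x - 1) / (x + 1)) ^ (1 / 4 : ℝ)) ^ 2)
      (𝓝[>] 1) (𝓝 (1 / 2)) := by
  have h := Real.tendsto_sqrt_sq_sub_one_div_arcosh.const_mul (1 / 2)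
  rw [mul_one] at h
  refine h.congr' ?_
  filter_upwards [self_mem_nhdsWithin] with x hx
  have hγ : 0 < ((x - 1) / (x + 1)) ^ (1 / 4 : ℝ) :=
    Real.rpow_pos_of_pos (div_pos (by linarith [hx.out]) (by linarith [hx.out])) _
  have key := rpow_one_fourth_sq_mul_sqrt_sq_sub_one hx.out.le
  have harcosh := Real.arcosh_pos hx
  generalize ((x - 1) / (x + 1)) ^ (1 / 4 : ℝ) = γ at hγ key ⊢
  rw [← key]
  field_simp

theorem Matrix.inv_eq_adjugate_of_det_eq_one {n R : Type*} [Fintype n] [DecidableEq n]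
    [CommRing R] {A : Matrix n n R} (h : A.det = 1) : A⁻¹ = A.adjugate := by
  rw [inv_def, h, Ring.inverse_one, one_smul]

theorem Matrix.tendsto_mul_mul_inv_of_tendsto_one {ι n 𝕜 : Type*} [Fintype n] [DecidableEq n]
    [NormedField 𝕜] {l : Filter ι} {D : ι → Matrix n n 𝕜} (hD : Tendsto D l (𝓝 1))
    (A : Matrix n n 𝕜) : Tendsto (fun i => D i * A * (D i)⁻¹) l (𝓝 A) := by
  have hinv : ContinuousAt Inv.inv (1 : Matrix n n 𝕜) :=
    continuousAt_matrix_inv 1 (by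
      rw [det_one, Ring.inverse_eq_inv']
      exact continuousAt_inv₀ one_ne_zero)
  simpa using (hD.mul_const A).mul (hinv.tendsto.comp hD)

theorem tendsto_diag_self_inv_fin_two {ι : Type*} {l : Filter ι} {f : ι → ℂ}
    (hf : Tendsto f l (𝓝 1)) : Tendsto (fun i => !![f i, 0; 0, (f i)⁻¹]) l (𝓝 1) := by
  have h : ContinuousAt (fun z : ℂ => !![z, 0; 0, z⁻¹]) 1 :=
    continuousAt_pi.mpr fun i => continuousAt_pi.mpr fun j => by
      fin_cases i <;> fin_cases j <;> simp <;> fun_prop (disch := norm_num)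
  simpa [one_fin_two, Function.comp_def] using h.tendsto.comp hf

noncomputable def parametrix (g : ℂ) : Matrix (Fin 2) (Fin 2) ℂ :=
  (1 / 2 : ℂ) • !![g + g⁻¹, -I * (g - g⁻¹); I * (g - g⁻¹), g + g⁻¹]

def scaledParametrix (g : ℂ) : Matrix (Fin 2) (Fin 2) ℂ :=
  !![g ^ 2 + 1, -I * (g ^ 2 - 1); I * (g ^ 2 - 1), g ^ 2 + 1]

theorem continuous_scaledParametrix : Continuous scaledParametrix :=
  continuous_matrix fun i j => by
    fin_cases i <;> fin_cases j <;> simp [scaledParametrix] <;> fun_prop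

theorem parametrix_eq_smul {g : ℂ} (hg : g ≠ 0) :
    parametrix g = (2 * g)⁻¹ • scaledParametrix g := by
  ext i j
  fin_cases i <;> fin_cases j <;> simp [parametrix, scaledParametrix] <;> field_simp

theorem det_scaledParametrix (g : ℂ) : (scaledParametrix g).det = 4 * g ^ 2 := by
  rw [scaledParametrix, det_fin_two_of]
  linear_combination (g ^ 2 - 1) ^ 2 * I_sq

theorem det_parametrix {g : ℂ} (hg : g ≠ 0) : (parametrix g).det = 1 := by
  rw [parametrix_eq_smul hg, det_smul, det_scaledParametrix, Fintype.card_fin]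
  field_simp
  ring

theorem sq_smul_parametrix_conj {g : ℂ} (hg : g ≠ 0) (X : Matrix (Fin 2) (Fin 2) ℂ) :
    g ^ 2 • (parametrix g * X * (parametrix g)⁻¹) =
      (1 / 4 : ℂ) • (scaledParametrix g * X * adjugate (scaledParametrix g)) := by
  rw [inv_eq_adjugate_of_det_eq_one (det_parametrix hg), parametrix_eq_smul hg, adjugate_smul]
  simp only [Fintype.card_fin, Nat.add_one_sub_one, pow_one, Matrix.smul_mul, Matrix.mul_smul,
    smul_smul]
  congr 1
  field_simp
  ring

theorem tendsto_sq_smul_parametrix_conj {ι : Type*} {l : Filter ι} {g : ι → ℂ}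
    {X : ι → Matrix (Fin 2) (Fin 2) ℂ} {X₀ : Matrix (Fin 2) (Fin 2) ℂ}
    (hg : Tendsto g l (𝓝 0)) (hg0 : ∀ᶠ i in l, g i ≠ 0) (hX : Tendsto X l (𝓝 X₀)) :
    Tendsto (fun i => g i ^ 2 • (parametrix (g i) * X i * (parametrix (g i))⁻¹)) l
      (𝓝 ((1 / 4 : ℂ) • (scaledParametrix 0 * X₀ * adjugate (scaledParametrix 0)))) := by
  have hP := continuous_scaledParametrix.continuousAt.tendsto.comp hg
  have hadj := continuous_scaledParametrix.matrix_adjugate.continuousAt.tendsto.comp hg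
  refine (((hP.mul hX).mul hadj).const_smul (1 / 4 : ℂ)).congr' ?_
  filter_upwards [hg0] with i hi
  exact (sq_smul_parametrix_conj hi (X i)).symm

theorem scaledParametrix_zero_conj (a : ℂ) :
    (1 / 2 : ℂ) • (1 / 4 : ℂ) •
      (scaledParametrix 0 * !![-(a + 1 / 4), -I / 2; -I / 2, a + 1 / 4] *
        adjugate (scaledParametrix 0)) = ((4 * a - 1) / 16) • !![-1, I; I, 1] := by
  simp only [scaledParametrix, adjugate_fin_two_of, mul_fin_two, smul_of]
  ext i j
  fin_cases i <;> fin_cases j <;> simp <;> ring_nf <;> simp only [I_sq, I_pow_three] <;> ring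

/-- with `φ(x) = x + √(x²-1)`, `γ(x) = ((x-1)/(x+1))^{1/4}`,
`F(x) = φ(x)^{(α+β)/2}`, `M(x)` the global parametrix matrix, `F(x)^{σ₃}` the diagonal matrix
`diag(F(x), F(x)⁻¹)` and `A₁` as given, the limit as `x → 1⁺` of
`((x-1)/(2 log φ(x))) • M(x) F(x)^{σ₃} A₁ F(x)^{-σ₃} M(x)⁻¹` exists and equals
`((4α²-1)/16) • [[-1, i],[i, 1]]`. -/
theorem delta1_residue_limit (α β : ℝ)
    (φ γ F : ℝ → ℝ) (M Fs : ℝ → Matrix (Fin 2) (Fin 2) ℂ) (A1 : Matrix (Fin 2) (Fin 2) ℂ)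
    (hφ : ∀ x : ℝ, φ x = x + Real.sqrt (x ^ 2 - 1))
    (hγ : ∀ x : ℝ, γ x = ((x - 1) / (x + 1)) ^ ((1 : ℝ) / 4))
    (hF : ∀ x : ℝ, F x = φ x ^ ((α + β) / 2))
    (hM : ∀ x : ℝ, M x = ((1 : ℂ) / 2) •
      !![((γ x : ℂ) + (γ x : ℂ)⁻¹), -Complex.I * ((γ x : ℂ) - (γ x : ℂ)⁻¹);
         Complex.I * ((γ x : ℂ) - (γ x : ℂ)⁻¹), ((γ x : ℂ) + (γ x : ℂ)⁻¹)])
    (hFs : ∀ x : ℝ, Fs x = !![(F x : ℂ), 0; 0, (F x : ℂ)⁻¹])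
    (hA1 : A1 = !![-((α : ℂ) ^ 2 + 1 / 4), -Complex.I / 2;
                   -Complex.I / 2, (α : ℂ) ^ 2 + 1 / 4]) :
    Tendsto
      (fun x : ℝ =>
        (((x - 1) / (2 * Real.log (φ x)) : ℝ) : ℂ) •
          (M x * Fs x * A1 * (Fs x)⁻¹ * (M x)⁻¹))
      (nhdsWithin 1 (Set.Ioi 1))
      (nhds ((((4 * (α : ℂ) ^ 2 - 1) / 16)) •
        !![(-1 : ℂ), Complex.I; Complex.I, 1])) := by
  have hγ0 : Tendsto (fun x => (γ x : ℂ)) (𝓝[>] 1) (𝓝 0) := by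
    simpa [hγ] using tendsto_rpow_one_fourth_nhdsGT_one.ofReal
  have hγne : ∀ᶠ x in 𝓝[>] 1, (γ x : ℂ) ≠ 0 := by
    filter_upwards [self_mem_nhdsWithin] with x hx
    rw [hγ, ofReal_ne_zero]
    exact (Real.rpow_pos_of_pos (div_pos (by linarith [hx.out]) (by linarith [hx.out])) _).ne'
  have hFs1 : Tendsto Fs (𝓝[>] 1) (𝓝 1) := by
    refine (tendsto_diag_self_inv_fin_two ?_).congr fun x => (hFs x).symm
    simpa [hF, hφ] using
      ((tendsto_add_sqrt_sq_sub_one_rpow ((α + β) / 2)).mono_left nhdsWithin_le_nhds).ofReal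
  have hratio : Tendsto (fun x => (((x - 1) / (2 * Real.log (φ x)) / γ x ^ 2 : ℝ) : ℂ))
      (𝓝[>] 1) (𝓝 (1 / 2)) := by
    simpa [hγ, hφ, Real.arcosh] using tendsto_div_two_arcosh_div_rpow_one_fourth_sq.ofReal
  subst hA1
  rw [← scaledParametrix_zero_conj]
  refine (hratio.smul (tendsto_sq_smul_parametrix_conj hγ0 hγne
    (tendsto_mul_mul_inv_of_tendsto_one hFs1 _))).congr' ?_
  filter_upwards [hγne] with x hx
  rw [smul_smul, show M x = parametrix (γ x) from hM x]
  congr 1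
  · push_cast
    field_simp
  · simp only [Matrix.mul_assoc]
end

section
/- For every real R > 1 and every integer m ≥ 0, the contour integral over the positively oriented circle of radius R centered at 0 satisfies ∮_{|ζ|=R} ζ^{2m} / ((ζ−1)^{1/2}(ζ+1)^{1/2}) dζ = 2πi · (1/2)_m / m!, where (1/2)_m is the Pochhammer symbol and each square root is the principal complex square root. In particular (m = 0), ∮_{|ζ|=R} dζ/((ζ−1)^{1/2}(ζ+1)^{1/2}) = 2πi. -/
/-!
For `‖ζ‖ > 1` the principal branches satisfy `(ζ - 1)^{1/2} (ζ + 1)^{1/2} = ζ (1 - ζ⁻²)^{1/2}`: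
both sides square to `ζ² - 1`, both are continuous along the circle of radius `‖ζ‖` away from the
negative real axis and agree on the positive one, and on the negative real axis both sides are
computed directly. Expanding `(1 - ζ⁻²)^{-1/2}` by the binomial series turns the integrand
`ζ^{2m} / ((ζ - 1)^{1/2} (ζ + 1)^{1/2})` into the Laurent series
`∑ₖ binom(k - 1/2, k) ζ^{2m - 1 - 2k}`, which converges absolutely and uniformly on the circle of
radius `R`. Integrating termwise, only `k = m` contributes, giving `2πi binom(m - 1/2, m)`, and
`binom(m - 1/2, m) = (1/2)_m / m!`.
-/

/-- The Pochhammer symbol (rising factorial) `(x)_m = x (x+1) ⋯ (x+m-1)`, with `(x)_0 = 1`. -/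
noncomputable def pochC (x : ℂ) (m : ℕ) : ℂ := ∏ i ∈ Finset.range m, (x + (i : ℂ))

open Complex Real Set Metric MeasureTheory

lemma pochC_eq_ascPochhammer_eval (x : ℂ) (m : ℕ) : pochC x m = (ascPochhammer ℂ m).eval x := by
  induction m with
  | zero => simp [pochC]
  | succ m ih => rw [pochC, Finset.prod_range_succ, ← pochC, ih, ascPochhammer_succ_eval]

lemma pochC_div_factorial (x : ℂ) (m : ℕ) :
    pochC x m / m.factorial = Ring.choose (x + m - 1) m := by
  rw [← Ring.multichoose_eq, pochC_eq_ascPochhammer_eval, ← Polynomial.ascPochhammer_smeval_eq_eval,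
    ← Ring.factorial_nsmul_multichoose_eq_ascPochhammer, nsmul_eq_mul,
    mul_div_cancel_left₀ _ (by exact_mod_cast m.factorial_ne_zero)]

lemma zpow_sub_one_sub_two_mul {G₀ : Type*} [CommGroupWithZero G₀] {x : G₀} (hx : x ≠ 0)
    (n : ℤ) (k : ℕ) : x ^ (n - 1 - 2 * k) = x ^ (n - 1) * ((x ^ 2)⁻¹) ^ k := by
  rw [sub_eq_add_neg (n - 1), zpow_add₀ hx, zpow_neg, inv_pow, ← pow_mul, ← zpow_natCast]
  push_cast
  rfl

theorem hasSum_choose_mul_pow (a : ℂ) {w : ℂ} (hw : ‖w‖ < 1) :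
    HasSum (fun n : ℕ ↦ Ring.choose (a + n - 1) n * w ^ n) (1 / (1 - w) ^ a) := by
  have := (one_div_one_sub_cpow_hasFPowerSeriesOnBall_zero a).hasSum
    (y := w) (by simpa [← ofReal_norm, ENNReal.ofReal_lt_one] using hw)
  simpa [FormalMultilinearSeries.ofScalars_apply_eq, mul_comm] using this

theorem summable_norm_choose_mul_pow (a : ℂ) {r : ℝ} (hr0 : 0 ≤ r) (hr : r < 1) :
    Summable fun n : ℕ ↦ ‖Ring.choose (a + n - 1) n‖ * r ^ n := by
  have := (FormalMultilinearSeries.ofScalars ℂ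
    fun n : ℕ ↦ Ring.choose (a + n - 1) n).summable_norm_mul_pow (r := r.toNNReal)
    (lt_of_lt_of_le (by simpa using hr)
      (one_div_one_sub_cpow_hasFPowerSeriesOnBall_zero a).r_le)
  simpa [FormalMultilinearSeries.ofScalars_norm, hr0] using this

theorem hasSum_circleIntegral {E : Type*} [NormedAddCommGroup E] [NormedSpace ℂ E]
    [CompleteSpace E] {f : ℕ → ℂ → E} {b : ℕ → ℝ} {c : ℂ} {R : ℝ}
    (hf : ∀ k, CircleIntegrable (f k) c R) (hfb : ∀ k, ∀ z ∈ sphere c |R|, ‖f k z‖ ≤ b k)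
    (hb : Summable b) :
    HasSum (fun k ↦ ∮ z in C(c, R), f k z) (∮ z in C(c, R), ∑' k, f k z) := by
  refine intervalIntegral.hasSum_integral_of_dominated_convergence (fun k _ ↦ |R| * b k)
    (fun k ↦ (hf k).out.def'.aestronglyMeasurable) (fun k ↦ ae_of_all _ fun θ _ ↦ ?_)
    (ae_of_all _ fun _ _ ↦ hb.mul_left _) intervalIntegrable_const
    (ae_of_all _ fun θ _ ↦ ?_)
  · rw [deriv_circleMap, norm_smul, norm_mul, norm_I, mul_one, norm_circleMap_zero]
    exact mul_le_mul_of_nonneg_left (hfb k _ (circleMap_mem_sphere' c R θ)) (abs_nonneg R)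
  · exact ((hb.of_norm_bounded fun k ↦ hfb k _ (circleMap_mem_sphere' c R θ)).hasSum).const_smul _

theorem circleIntegral_tsum_mul_zpow {R : ℝ} (hR : 0 < R) {a : ℕ → ℂ} {e : ℕ → ℤ} {k₀ : ℕ}
    (ha : Summable fun k ↦ ‖a k‖ * R ^ e k) (he : ∀ k, e k = -1 ↔ k = k₀) :
    (∮ z in C(0, R), ∑' k, a k * z ^ e k) = 2 * π * I * a k₀ := by
  have hterm (k : ℕ) :
      (∮ z in C(0, R), a k * z ^ e k) = if k = k₀ then 2 * π * I * a k₀ else 0 := by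
    rw [circleIntegral.integral_const_mul]
    split_ifs with hk
    · have h := circleIntegral.integral_sub_center_inv (0 : ℂ) hR.ne'
      simp only [sub_zero] at h
      simp only [hk, (he k₀).mpr rfl, zpow_neg_one, h]
      ring
    · have h := circleIntegral.integral_sub_zpow_of_ne ((he k).not.mpr hk) 0 0 R
      simp only [sub_zero] at h
      rw [h, mul_zero]
  have hint (k : ℕ) : CircleIntegrable (fun z ↦ a k * z ^ e k) 0 R :=
    ContinuousOn.circleIntegrable hR.le fun z hz ↦ (continuousAt_const.mul
      (continuousAt_zpow₀ z (e k) (Or.inl (ne_of_mem_sphere hz hR.ne')))).continuousWithinAt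
  have hbound (k : ℕ) (z : ℂ) (hz : z ∈ sphere 0 |R|) : ‖a k * z ^ e k‖ ≤ ‖a k‖ * R ^ e k := by
    rw [mem_sphere_zero_iff_norm, abs_of_pos hR] at hz
    rw [norm_mul, norm_zpow, hz]
  have hsum := hasSum_circleIntegral hint hbound ha
  simp_rw [hterm] at hsum
  exact hsum.unique (hasSum_ite_eq k₀ _)

namespace Complex

lemma sub_one_mem_slitPlane {ζ : ℂ} (hζ : ζ ∈ slitPlane) (h1 : 1 < ‖ζ‖) :
    ζ - 1 ∈ slitPlane := by
  rw [mem_slitPlane_iff] at hζ ⊢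
  by_cases him : ζ.im = 0
  · have hre : 0 < ζ.re := hζ.resolve_right (not_not.mpr him)
    have : ‖ζ‖ = ζ.re := by rw [← abs_re_eq_norm.mpr him, abs_of_pos hre]
    left; rw [sub_re, one_re]; linarith
  · right; simpa using him

lemma add_one_mem_slitPlane {ζ : ℂ} (hζ : ζ ∈ slitPlane) : ζ + 1 ∈ slitPlane := by
  rw [mem_slitPlane_iff] at hζ ⊢
  rcases hζ with hre | him
  · left; rw [add_re, one_re]; linarith
  · right; simpa using him

lemma one_sub_inv_sq_mem_slitPlane {ζ : ℂ} (h1 : 1 < ‖ζ‖) : 1 - (ζ ^ 2)⁻¹ ∈ slitPlane := by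
  rw [sub_eq_add_neg]
  apply mem_slitPlane_of_norm_lt_one
  rw [norm_neg, norm_inv, norm_pow]
  exact inv_lt_one_of_one_lt₀ (one_lt_pow₀ h1 two_ne_zero)

lemma circleMap_mem_slitPlane {r θ : ℝ} (hr : 0 < r) (hθ : θ ∈ Ioo (-π) π) :
    circleMap 0 r θ ∈ slitPlane := by
  have harg : arg (circleMap 0 r θ) = θ := by
    rw [circleMap, zero_add, arg_real_mul _ hr, arg_exp_mul_I,
      toIocMod_eq_self _ |>.mpr ⟨hθ.1, by linarith [hθ.2]⟩]
  rw [mem_slitPlane_iff_arg, harg]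
  exact ⟨hθ.2.ne, circleMap_ne_center hr.ne'⟩

lemma cpow_half_sq (z : ℂ) : (z ^ (1 / 2 : ℂ)) ^ 2 = z := by
  simp [cpow_ofNat_inv_pow z 2]

lemma ofReal_cpow_half {a : ℝ} (ha : 0 ≤ a) : (a : ℂ) ^ (1 / 2 : ℂ) = (√a : ℝ) := by
  rw [Real.sqrt_eq_rpow, ofReal_cpow ha]; push_cast; rfl

lemma neg_ofReal_cpow_half {a : ℝ} (ha : 0 ≤ a) :
    (-a : ℂ) ^ (1 / 2 : ℂ) = (a : ℂ) ^ (1 / 2 : ℂ) * I := by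
  rw [← ofReal_neg, ofReal_cpow_of_nonpos (by linarith), ofReal_neg, neg_neg,
    show (π : ℂ) * I * (1 / 2) = π / 2 * I by ring, exp_pi_div_two_mul_I]

end Complex

lemma sq_sqrt_sub_one_mul_sqrt_add_one (ζ : ℂ) :
    ((ζ - 1) ^ (1 / 2 : ℂ) * (ζ + 1) ^ (1 / 2 : ℂ)) ^ 2 = ζ ^ 2 - 1 := by
  rw [mul_pow, cpow_half_sq, cpow_half_sq]; ring

lemma sq_mul_sqrt_one_sub_inv_sq {ζ : ℂ} (hζ : ζ ≠ 0) :
    (ζ * (1 - (ζ ^ 2)⁻¹) ^ (1 / 2 : ℂ)) ^ 2 = ζ ^ 2 - 1 := by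
  rw [mul_pow, cpow_half_sq]; field_simp

lemma mul_sqrt_one_sub_inv_sq_ne_zero {ζ : ℂ} (h1 : 1 < ‖ζ‖) :
    ζ * (1 - (ζ ^ 2)⁻¹) ^ (1 / 2 : ℂ) ≠ 0 := by
  have hζ : ζ ≠ 0 := norm_pos_iff.mp (one_pos.trans h1)
  refine mul_ne_zero hζ ?_
  rw [Ne, cpow_eq_zero_iff, not_and_or]
  exact Or.inl (slitPlane_ne_zero (one_sub_inv_sq_mem_slitPlane h1))

lemma continuousAt_sqrt_sub_one_mul_sqrt_add_one {ζ : ℂ} (hζ : ζ ∈ slitPlane)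
    (h1 : 1 < ‖ζ‖) :
    ContinuousAt (fun z : ℂ ↦ (z - 1) ^ (1 / 2 : ℂ) * (z + 1) ^ (1 / 2 : ℂ)) ζ :=
  ((continuousAt_id.sub continuousAt_const).cpow continuousAt_const
    (sub_one_mem_slitPlane hζ h1)).mul
    ((continuousAt_id.add continuousAt_const).cpow continuousAt_const (add_one_mem_slitPlane hζ))

lemma continuousAt_mul_sqrt_one_sub_inv_sq {ζ : ℂ} (h1 : 1 < ‖ζ‖) :
    ContinuousAt (fun z : ℂ ↦ z * (1 - (z ^ 2)⁻¹) ^ (1 / 2 : ℂ)) ζ := by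
  have hζ : ζ ≠ 0 := norm_pos_iff.mp (one_pos.trans h1)
  exact continuousAt_id.mul ((continuousAt_const.sub ((continuousAt_id.pow 2).inv₀
    (pow_ne_zero 2 hζ))).cpow continuousAt_const (one_sub_inv_sq_mem_slitPlane h1))

lemma sqrt_sub_one_mul_sqrt_add_one_ofReal {x : ℝ} (hx : 1 < x) :
    ((x : ℂ) - 1) ^ (1 / 2 : ℂ) * ((x : ℂ) + 1) ^ (1 / 2 : ℂ) =
      x * (1 - ((x : ℂ) ^ 2)⁻¹) ^ (1 / 2 : ℂ) := by
  have h0 : 0 < x := by linarith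
  have hx2 : 0 ≤ 1 - (x ^ 2)⁻¹ := by
    rw [sub_nonneg]; exact inv_le_one_of_one_le₀ (one_le_pow₀ hx.le)
  have key : √(x - 1) * √(x + 1) = x * √(1 - (x ^ 2)⁻¹) := by
    rw [← Real.sqrt_mul (by linarith), ← Real.sqrt_sq h0.le, ← Real.sqrt_mul (sq_nonneg x),
      Real.sqrt_sq h0.le]
    congr 1; field_simp; ring
  rw [show (x : ℂ) - 1 = ((x - 1 : ℝ) : ℂ) by push_cast; rfl,
    show (x : ℂ) + 1 = ((x + 1 : ℝ) : ℂ) by push_cast; rfl,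
    show 1 - ((x : ℂ) ^ 2)⁻¹ = ((1 - (x ^ 2)⁻¹ : ℝ) : ℂ) by push_cast; rfl,
    ofReal_cpow_half (by linarith), ofReal_cpow_half (by linarith), ofReal_cpow_half hx2]
  exact_mod_cast key

lemma sqrt_sub_one_mul_sqrt_add_one_neg_ofReal {x : ℝ} (hx : 1 < x) :
    (-(x : ℂ) - 1) ^ (1 / 2 : ℂ) * (-(x : ℂ) + 1) ^ (1 / 2 : ℂ) =
      -x * (1 - ((-x : ℂ) ^ 2)⁻¹) ^ (1 / 2 : ℂ) := by
  rw [show -(x : ℂ) - 1 = -((x + 1 : ℝ) : ℂ) by push_cast; ring,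
    show -(x : ℂ) + 1 = -((x - 1 : ℝ) : ℂ) by push_cast; ring,
    neg_ofReal_cpow_half (by linarith), neg_ofReal_cpow_half (by linarith), neg_sq]
  push_cast
  linear_combination ((x + 1 : ℂ) ^ (1 / 2 : ℂ) * (x - 1 : ℂ) ^ (1 / 2 : ℂ)) * I_sq -
    sqrt_sub_one_mul_sqrt_add_one_ofReal hx

lemma sqrt_sub_one_mul_sqrt_add_one_of_mem_slitPlane {ζ : ℂ} (hζ : ζ ∈ slitPlane)
    (h1 : 1 < ‖ζ‖) :
    (ζ - 1) ^ (1 / 2 : ℂ) * (ζ + 1) ^ (1 / 2 : ℂ) = ζ * (1 - (ζ ^ 2)⁻¹) ^ (1 / 2 : ℂ) := by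
  set r := ‖ζ‖
  have hr : 0 < r := one_pos.trans h1
  have hnorm (θ : ℝ) : 1 < ‖circleMap 0 r θ‖ := by simpa [abs_of_pos hr] using h1
  have hθ : arg ζ ∈ Ioo (-π) π :=
    ⟨neg_pi_lt_arg ζ, (arg_le_pi ζ).lt_of_ne (mem_slitPlane_iff_arg.mp hζ).1⟩
  have hcirc : circleMap 0 r (arg ζ) = ζ := by simp [circleMap, r, norm_mul_exp_arg_mul_I]
  have key := isPreconnected_Ioo.eq_of_sq_eq
    (f := fun θ ↦ (circleMap 0 r θ - 1) ^ (1 / 2 : ℂ) * (circleMap 0 r θ + 1) ^ (1 / 2 : ℂ))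
    (g := fun θ ↦ circleMap 0 r θ * (1 - (circleMap 0 r θ ^ 2)⁻¹) ^ (1 / 2 : ℂ))
    (fun θ hθ ↦ ((continuousAt_sqrt_sub_one_mul_sqrt_add_one (circleMap_mem_slitPlane hr hθ)
      (hnorm θ)).comp (continuous_circleMap 0 r).continuousAt).continuousWithinAt)
    (fun θ _ ↦ ((continuousAt_mul_sqrt_one_sub_inv_sq (hnorm θ)).comp
      (continuous_circleMap 0 r).continuousAt).continuousWithinAt)
    (fun θ _ ↦ by
      simp only [Pi.pow_apply]
      rw [sq_sqrt_sub_one_mul_sqrt_add_one,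
        sq_mul_sqrt_one_sub_inv_sq (circleMap_ne_center hr.ne')])
    (fun {θ} _ ↦ mul_sqrt_one_sub_inv_sq_ne_zero (hnorm θ))
    (y := 0) ⟨by linarith [pi_pos], pi_pos⟩
    (by simpa [circleMap] using sqrt_sub_one_mul_sqrt_add_one_ofReal h1)
  simpa [hcirc] using key hθ

theorem sqrt_sub_one_mul_sqrt_add_one {ζ : ℂ} (h1 : 1 < ‖ζ‖) :
    (ζ - 1) ^ (1 / 2 : ℂ) * (ζ + 1) ^ (1 / 2 : ℂ) = ζ * (1 - (ζ ^ 2)⁻¹) ^ (1 / 2 : ℂ) := by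
  by_cases hζ : ζ ∈ slitPlane
  · exact sqrt_sub_one_mul_sqrt_add_one_of_mem_slitPlane hζ h1
  · have hneg : ζ = -(‖ζ‖ : ℂ) := by
      rw [mem_slitPlane_iff, not_or, not_lt, not_not] at hζ
      have hnorm : ‖ζ‖ = -ζ.re := by rw [← abs_re_eq_norm.mpr hζ.2, abs_of_nonpos hζ.1]
      apply Complex.ext <;> simp [hζ.2, hnorm]
    rw [hneg]
    exact sqrt_sub_one_mul_sqrt_add_one_neg_ofReal (by simpa using h1)

theorem hasSum_zpow_div_sqrt_sub_one_mul_sqrt_add_one {ζ : ℂ} (h1 : 1 < ‖ζ‖) (n : ℤ) :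
    HasSum (fun k : ℕ ↦ Ring.choose ((1 / 2 : ℂ) + k - 1) k * ζ ^ (n - 1 - 2 * k))
      (ζ ^ n / ((ζ - 1) ^ (1 / 2 : ℂ) * (ζ + 1) ^ (1 / 2 : ℂ))) := by
  have hζ : ζ ≠ 0 := norm_pos_iff.mp (one_pos.trans h1)
  have hw : ‖(ζ ^ 2)⁻¹‖ < 1 := by
    rw [norm_inv, norm_pow]; exact inv_lt_one_of_one_lt₀ (one_lt_pow₀ h1 two_ne_zero)
  have hterm (k : ℕ) : Ring.choose ((1 / 2 : ℂ) + k - 1) k * ζ ^ (n - 1 - 2 * k) =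
      ζ ^ (n - 1) * (Ring.choose ((1 / 2 : ℂ) + k - 1) k * ((ζ ^ 2)⁻¹) ^ k) := by
    rw [zpow_sub_one_sub_two_mul hζ]
    ring
  have hval : ζ ^ n / (ζ * (1 - (ζ ^ 2)⁻¹) ^ (1 / 2 : ℂ)) =
      ζ ^ (n - 1) * (1 / (1 - (ζ ^ 2)⁻¹) ^ (1 / 2 : ℂ)) := by
    rw [zpow_sub_one₀ hζ]
    field_simp
  rw [sqrt_sub_one_mul_sqrt_add_one h1, hval]
  simp_rw [hterm]
  exact (hasSum_choose_mul_pow (1 / 2) hw).mul_left _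

theorem circleIntegral_pow_div_sqrt_sub_one_mul_sqrt_add_one {R : ℝ} (hR : 1 < R) (m : ℕ) :
    (∮ ζ in C(0, R), ζ ^ (2 * m) / ((ζ - 1) ^ (1 / 2 : ℂ) * (ζ + 1) ^ (1 / 2 : ℂ))) =
      2 * π * I * Ring.choose ((1 / 2 : ℂ) + m - 1) m := by
  have hR0 : 0 < R := one_pos.trans hR
  have hexp : EqOn (fun ζ : ℂ ↦ ζ ^ (2 * m) / ((ζ - 1) ^ (1 / 2 : ℂ) * (ζ + 1) ^ (1 / 2 : ℂ)))
      (fun ζ ↦ ∑' k : ℕ, Ring.choose ((1 / 2 : ℂ) + k - 1) k * ζ ^ (2 * (m : ℤ) - 1 - 2 * k))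
      (sphere 0 R) := fun ζ hζ ↦ by
    rw [mem_sphere_zero_iff_norm] at hζ
    have h := (hasSum_zpow_div_sqrt_sub_one_mul_sqrt_add_one (hζ ▸ hR) (2 * m)).tsum_eq
    dsimp only
    rw [← zpow_natCast, Nat.cast_mul, Nat.cast_ofNat, h]
  rw [circleIntegral.integral_congr hR0.le hexp]
  refine circleIntegral_tsum_mul_zpow hR0 ?_ fun k ↦ by omega
  have hr : (R ^ 2)⁻¹ < 1 := inv_lt_one_of_one_lt₀ (one_lt_pow₀ hR two_ne_zero)
  refine ((summable_norm_choose_mul_pow (1 / 2) (by positivity) hr).mul_left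
    (R ^ (2 * (m : ℤ) - 1))).congr fun k ↦ ?_
  rw [zpow_sub_one_sub_two_mul hR0.ne']
  ring

/-- for `R > 1` and `m ≥ 0`,
`∮_{|ζ|=R} ζ^{2m} / ((ζ-1)^{1/2}(ζ+1)^{1/2}) dζ = 2πi (1/2)_m / m!`; in particular (`m = 0`)
`∮_{|ζ|=R} dζ/((ζ-1)^{1/2}(ζ+1)^{1/2}) = 2πi`. -/
theorem circle_integral_even_power (R : ℝ) (hR : 1 < R) (m : ℕ) :
    (∮ ζ in C(0, R), ζ ^ (2 * m) / ((ζ - 1) ^ (1 / 2 : ℂ) * (ζ + 1) ^ (1 / 2 : ℂ)))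
        = 2 * Real.pi * Complex.I * pochC (1 / 2) m / (m.factorial : ℂ) ∧
      (∮ ζ in C(0, R), 1 / ((ζ - 1) ^ (1 / 2 : ℂ) * (ζ + 1) ^ (1 / 2 : ℂ)))
        = 2 * Real.pi * Complex.I := by
  constructor
  · rw [circleIntegral_pow_div_sqrt_sub_one_mul_sqrt_add_one hR, mul_div_assoc,
      pochC_div_factorial]
  · simpa using circleIntegral_pow_div_sqrt_sub_one_mul_sqrt_add_one hR 0
end

section
/- For every real R > 1 and every integer m ≥ 0, the contour integral over the positively oriented circle of radius R centered at 0 satisfies ∮_{|ζ|=R} ζ^{2m+1} / ((ζ−1)^{1/2}(ζ+1)^{1/2}) dζ = 0, where each square root is the principal complex square root. -/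
/-!
The integrand is even on `ℂ ∖ [-1, 1]`: `ζ ^ (2m+1)` is odd, and so is the branch
`(ζ - 1) ^ (1/2) (ζ + 1) ^ (1/2)` of `√(ζ² - 1)`, because passing from `w` to `-w` shifts `arg`
by `-π` or `+π`, with the same shift for `w = ζ + 1` and `w = ζ - 1` as long as `ζ ∉ [-1, 1]`.
For an even `f`, the integrand `θ ↦ f(R e^{iθ}) iR e^{iθ}` of the circle integral changes sign
under `θ ↦ θ + π`, so its integral over a full period vanishes.
-/

open Complex Real

theorem Function.Antiperiodic.intervalIntegral_add_two_mul_eq_zero {E : Type*}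
    [NormedAddCommGroup E] [NormedSpace ℝ E] {F : ℝ → E} {c : ℝ} (hF : Function.Antiperiodic F c)
    (t : ℝ) : ∫ θ in t..t + 2 * c, F θ = 0 := by
  have hshift : ∫ θ in t..t + 2 * c, F (θ + c) = ∫ θ in t..t + 2 * c, F θ := by
    rw [intervalIntegral.integral_comp_add_right, add_right_comm,
      hF.periodic_two_mul.intervalIntegral_add_eq]
  simp only [hF _, intervalIntegral.integral_neg] at hshift
  linear_combination (norm := module) (-(2 : ℝ)⁻¹) • hshift

theorem circleMap_zero_add_pi (R θ : ℝ) : circleMap 0 R (θ + π) = -circleMap 0 R θ := by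
  simp [circleMap, add_mul, Complex.exp_add]

theorem circleIntegral_eq_zero_of_even {E : Type*} [NormedAddCommGroup E] [NormedSpace ℂ E]
    {R : ℝ} {f : ℂ → E} (hf : ∀ z ∈ Metric.sphere (0 : ℂ) |R|, f (-z) = f z) :
    ∮ z in C(0, R), f z = 0 := by
  have hanti : Function.Antiperiodic
      (fun θ => deriv (circleMap 0 R) θ • f (circleMap 0 R θ)) π := fun θ => by
    simp only [deriv_circleMap, circleMap_zero_add_pi,
      hf _ (circleMap_mem_sphere' 0 R θ), neg_mul, neg_smul]
  rw [circleIntegral]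
  simpa only [zero_add] using hanti.intervalIntegral_add_two_mul_eq_zero 0

namespace Complex

theorem log_neg_eq_log_add (w : ℂ) : log (-w) = log w + ↑(arg (-w) - arg w) * I := by
  apply Complex.ext <;> simp [log_re, log_im]

theorem neg_cpow_eq_exp_mul_cpow {w : ℂ} (hw : w ≠ 0) (s : ℂ) :
    (-w) ^ s = exp (↑(arg (-w) - arg w) * s * I) * w ^ s := by
  rw [cpow_def_of_ne_zero (neg_ne_zero.mpr hw), cpow_def_of_ne_zero hw, log_neg_eq_log_add,
    ← Complex.exp_add]
  ring_nf

theorem exp_arg_neg_sub_arg_mul_I {w : ℂ} (hw : w ≠ 0) :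
    exp (↑(arg (-w) - arg w) * I) = -1 := by
  have hpolar := norm_mul_exp_arg_mul_I w
  have hpolar_neg := norm_mul_exp_arg_mul_I (-w)
  rw [norm_neg] at hpolar_neg
  have hnorm : (‖w‖ : ℂ) ≠ 0 := ofReal_ne_zero.mpr (norm_ne_zero_iff.mpr hw)
  have hexp : exp (arg (-w) * I) = -exp (arg w * I) :=
    mul_left_cancel₀ hnorm (by rw [hpolar_neg, mul_neg, hpolar])
  rw [ofReal_sub, sub_mul, Complex.exp_sub, hexp, neg_div, div_self (Complex.exp_ne_zero _)]

theorem arg_neg_sub_arg_add_one_eq {ζ : ℂ} (hζ : ζ.im = 0 → 1 < |ζ.re|) :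
    arg (-(ζ + 1)) - arg (ζ + 1) = arg (-(ζ - 1)) - arg (ζ - 1) := by
  rcases lt_trichotomy ζ.im 0 with him | him | him
  · rw [arg_neg_eq_arg_add_pi_of_im_neg (by simpa using him),
      arg_neg_eq_arg_add_pi_of_im_neg (by simpa using him)]
    ring
  · obtain ⟨x, rfl⟩ : ∃ x : ℝ, ζ = x := ⟨ζ.re, Complex.ext rfl (by simpa using him)⟩
    have hx : 1 < |x| := by simpa using hζ
    simp only [← ofReal_one, ← ofReal_add, ← ofReal_sub, ← ofReal_neg]
    rcases lt_abs.mp hx with hx | hx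
    · rw [arg_ofReal_of_neg (by linarith), arg_ofReal_of_nonneg (by linarith),
        arg_ofReal_of_neg (by linarith), arg_ofReal_of_nonneg (by linarith)]
    · rw [arg_ofReal_of_nonneg (by linarith), arg_ofReal_of_neg (by linarith),
        arg_ofReal_of_nonneg (by linarith), arg_ofReal_of_neg (by linarith)]
  · rw [arg_neg_eq_arg_sub_pi_of_im_pos (by simpa using him),
      arg_neg_eq_arg_sub_pi_of_im_pos (by simpa using him)]
    ring

end Complex

noncomputable def sqrtSqSubOne (ζ : ℂ) : ℂ := (ζ - 1) ^ (1 / 2 : ℂ) * (ζ + 1) ^ (1 / 2 : ℂ)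

theorem sqrtSqSubOne_neg {ζ : ℂ} (hζ : ζ.im = 0 → 1 < |ζ.re|) :
    sqrtSqSubOne (-ζ) = -sqrtSqSubOne ζ := by
  have hplus : ζ + 1 ≠ 0 := fun h => by
    have : ζ = -1 := eq_neg_of_add_eq_zero_left h
    simp [this] at hζ
  have hminus : ζ - 1 ≠ 0 := fun h => by
    have : ζ = 1 := sub_eq_zero.mp h
    simp [this] at hζ
  have hsq : exp (↑(arg (-(ζ + 1)) - arg (ζ + 1)) * (1 / 2) * I) *
      exp (↑(arg (-(ζ + 1)) - arg (ζ + 1)) * (1 / 2) * I) = -1 := by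
    rw [← Complex.exp_add, ← exp_arg_neg_sub_arg_mul_I hplus]
    ring_nf
  rw [sqrtSqSubOne, sqrtSqSubOne, show -ζ - 1 = -(ζ + 1) by ring, show -ζ + 1 = -(ζ - 1) by ring,
    neg_cpow_eq_exp_mul_cpow hplus, neg_cpow_eq_exp_mul_cpow hminus,
    ← arg_neg_sub_arg_add_one_eq hζ]
  linear_combination ((ζ + 1) ^ (1 / 2 : ℂ) * (ζ - 1) ^ (1 / 2 : ℂ)) * hsq

/-- for `R > 1` and `m ≥ 0`,
`∮_{|ζ|=R} ζ^{2m+1} / ((ζ-1)^{1/2}(ζ+1)^{1/2}) dζ = 0` (principal square roots). -/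
theorem circle_integral_odd_power (R : ℝ) (hR : 1 < R) (m : ℕ) :
    (∮ ζ in C(0, R), ζ ^ (2 * m + 1) / ((ζ - 1) ^ (1 / 2 : ℂ) * (ζ + 1) ^ (1 / 2 : ℂ))) = 0 := by
  refine circleIntegral_eq_zero_of_even fun ζ hζ => ?_
  have hcut : ζ.im = 0 → 1 < |ζ.re| := fun him => by
    rw [abs_re_eq_norm.mpr him, mem_sphere_zero_iff_norm.mp hζ]
    exact hR.trans_le (le_abs_self R)
  change (-ζ) ^ (2 * m + 1) / sqrtSqSubOne (-ζ) = ζ ^ (2 * m + 1) / sqrtSqSubOne ζ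
  rw [(odd_two_mul_add_one m).neg_pow, sqrtSqSubOne_neg hcut, neg_div_neg_eq]
end

section
/- Let z ∈ ℂ ∖ [−1,1] and let R be a real number with 1 < R < |z|. Then (1/(2πi)) · ∮_{|ζ|=R} ζ / ((ζ−1)^{1/2}(ζ+1)^{1/2}(ζ−z)) dζ = 1 − z/((z−1)^{1/2}(z+1)^{1/2}), where the integral is over the positively oriented circle of radius R centered at 0 and each square root is the principal complex square root. -/
open Complex Filter Metric Bornology Topology Set
open scoped Real ComplexConjugate

namespace Complex

lemma re_cpow_inv_two_pos {x : ℂ} (hx : 0 < x.re) : 0 < (x ^ (2⁻¹ : ℂ)).re := by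
  rw [cpow_inv_two_re]
  exact Real.sqrt_pos.2 (by linarith [re_le_norm x])

lemma im_cpow_inv_two_mul_im_cpow_inv_two_nonneg {x y : ℂ} (h : x.im = y.im) :
    0 ≤ (x ^ (2⁻¹ : ℂ)).im * (y ^ (2⁻¹ : ℂ)).im := by
  rcases le_or_gt 0 x.im with hx | hx
  · rw [cpow_inv_two_im_eq_sqrt hx, cpow_inv_two_im_eq_sqrt (h ▸ hx)]
    positivity
  · rw [cpow_inv_two_im_eq_neg_sqrt hx, cpow_inv_two_im_eq_neg_sqrt (h ▸ hx), neg_mul_neg]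
    positivity

lemma re_mul_mul_conj_sq_add_sq (a b : ℂ) :
    (a * b * conj (a ^ 2 + b ^ 2)).re = (normSq a + normSq b) * (a.re * b.re + a.im * b.im) := by
  simp only [map_add, mul_re, mul_im, add_re, add_im, pow_two, conj_re, conj_im, normSq_apply]
  ring

theorem cpow_inv_two_sub_one_mul_cpow_inv_two_add_one {ζ : ℂ} (hζ : ζ ≠ 0)
    (h : 0 < (1 - ζ⁻¹ ^ 2).re) :
    (ζ - 1) ^ (2⁻¹ : ℂ) * (ζ + 1) ^ (2⁻¹ : ℂ) = ζ * (1 - ζ⁻¹ ^ 2) ^ (2⁻¹ : ℂ) := by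
  set a := (ζ - 1) ^ (2⁻¹ : ℂ)
  set b := (ζ + 1) ^ (2⁻¹ : ℂ)
  set v := (1 - ζ⁻¹ ^ 2) ^ (2⁻¹ : ℂ)
  have ha : a ^ 2 = ζ - 1 := cpow_ofNat_inv_pow _ 2
  have hb : b ^ 2 = ζ + 1 := cpow_ofNat_inv_pow _ 2
  have hv : v ^ 2 = 1 - ζ⁻¹ ^ 2 := cpow_ofNat_inv_pow _ 2
  have hsq : (a * b) ^ 2 = (ζ * v) ^ 2 := by
    rw [mul_pow, mul_pow, ha, hb, hv]
    field_simp
    ring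
  refine (sq_eq_sq_iff_eq_or_eq_neg.1 hsq).resolve_right fun hneg => ?_
  have hsum : a ^ 2 + b ^ 2 = 2 * ζ := by rw [ha, hb]; ring
  have hnonneg : 0 ≤ (a * b * conj (a ^ 2 + b ^ 2)).re := by
    have hre_a : 0 ≤ a.re := by rw [cpow_inv_two_re]; positivity
    have hre_b : 0 ≤ b.re := by rw [cpow_inv_two_re]; positivity
    have him : 0 ≤ a.im * b.im := im_cpow_inv_two_mul_im_cpow_inv_two_nonneg (by simp)
    rw [re_mul_mul_conj_sq_add_sq]
    exact mul_nonneg (add_nonneg (normSq_nonneg a) (normSq_nonneg b))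
      (add_nonneg (mul_nonneg hre_a hre_b) him)
  have hneg_re : (a * b * conj (a ^ 2 + b ^ 2)).re = -(2 * normSq ζ * v.re) := by
    rw [hneg, hsum, map_mul, map_ofNat,
      show -(ζ * v) * (2 * conj ζ) = -(2 * (ζ * conj ζ) * v) by ring, mul_conj]
    simp
  have hpos : 0 < 2 * normSq ζ * v.re :=
    mul_pos (mul_pos two_pos (normSq_pos.2 hζ)) (re_cpow_inv_two_pos h)
  linarith

lemma re_one_sub_inv_sq_pos {ζ : ℂ} (h : 1 < ‖ζ‖) : 0 < (1 - ζ⁻¹ ^ 2).re := by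
  have hsmall : ‖ζ⁻¹ ^ 2‖ < 1 := by
    rw [norm_pow, norm_inv]
    exact pow_lt_one₀ (by positivity) (inv_lt_one_of_one_lt₀ h) two_ne_zero
  rw [sub_re, one_re]
  linarith [re_le_norm (ζ⁻¹ ^ 2)]

end Complex

theorem circleIntegral_sub_inv_eq_zero_of_lt_norm {R : ℝ} {z : ℂ} (hR : 0 ≤ R) (hz : R < ‖z‖) :
    ∮ ζ in C(0, R), (ζ - z)⁻¹ = 0 := by
  have hne : ∀ ζ ∈ closedBall (0 : ℂ) R, ζ - z ≠ 0 := fun ζ hζ => sub_ne_zero.2 <| by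
    rintro rfl
    exact (mem_closedBall_zero_iff.1 hζ).not_gt hz
  refine circleIntegral_eq_zero_of_differentiable_on_off_countable hR countable_empty
    (fun ζ hζ => ((continuousAt_id.sub continuousAt_const).inv₀ (hne ζ hζ)).continuousWithinAt)
    fun ζ hζ => (differentiableAt_id.sub_const z).inv (hne ζ (ball_subset_closedBall hζ.1))

theorem tendsto_circleIntegral_atTop_of_tendsto_mul {h : ℂ → ℂ} {R : ℝ} {L : ℂ}
    (hc : ContinuousOn h {ζ | R ≤ ‖ζ‖})
    (hL : Tendsto (fun ζ => ζ * h ζ) (cobounded ℂ) (𝓝 L)) :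
    Tendsto (fun ρ : ℝ => ∮ ζ in C(0, ρ), h ζ) atTop (𝓝 (2 * π * I * L)) := by
  rw [Metric.tendsto_nhds]
  intro ε hε
  have hsmall : ∀ᶠ ζ in cobounded ℂ, ‖ζ * h ζ - L‖ < ε / (4 * π) := by
    simpa only [dist_eq_norm] using Metric.tendsto_nhds.1 hL _ (by positivity)
  rw [← comap_norm_atTop, eventually_comap, eventually_atTop] at hsmall
  obtain ⟨M, hM⟩ := hsmall
  filter_upwards [eventually_ge_atTop M, eventually_gt_atTop (max R 0)] with ρ hρM hρ
  have hρ0 : 0 < ρ := (le_max_right _ _).trans_lt hρ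
  have hint : CircleIntegrable h 0 ρ := (hc.mono fun ζ hζ => by
    show R ≤ ‖ζ‖
    rw [mem_sphere_zero_iff_norm.1 hζ]
    exact (le_max_left _ _).trans hρ.le).circleIntegrable hρ0.le
  have hdiff : ∮ ζ in C(0, ρ), ζ⁻¹ * (ζ * h ζ - L)
      = (∮ ζ in C(0, ρ), h ζ) - 2 * π * I * L := by
    have hL' : CircleIntegrable (fun ζ => L * (ζ - 0)⁻¹) 0 ρ :=
      (circleIntegrable_sub_inv_iff.2 (.inr (by simpa using (abs_pos.2 hρ0.ne').ne))).const_mul L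
    calc ∮ ζ in C(0, ρ), ζ⁻¹ * (ζ * h ζ - L) = ∮ ζ in C(0, ρ), (h ζ - L * (ζ - 0)⁻¹) :=
          circleIntegral.integral_congr hρ0.le fun ζ hζ => by
            have : ζ ≠ 0 := ne_zero_of_mem_sphere hρ0.ne' ⟨ζ, hζ⟩
            field_simp
            ring
      _ = (∮ ζ in C(0, ρ), h ζ) - 2 * π * I * L := by
        rw [circleIntegral.integral_sub hint hL', circleIntegral.integral_const_mul,
          circleIntegral.integral_sub_inv_of_mem_ball (mem_ball_self hρ0)]
        ring
  rw [dist_eq_norm, ← hdiff]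
  calc ‖∮ ζ in C(0, ρ), ζ⁻¹ * (ζ * h ζ - L)‖ ≤ 2 * π * ρ * (ε / (4 * π) / ρ) := by
        refine circleIntegral.norm_integral_le_of_norm_le_const hρ0.le fun ζ hζ => ?_
        have hζρ := mem_sphere_zero_iff_norm.1 hζ
        rw [norm_mul, norm_inv, hζρ, inv_mul_eq_div]
        gcongr
        exact (hM _ (hζρ ▸ hρM) ζ rfl).le
    _ = ε / 2 := by field_simp; ring
    _ < ε := half_lt_self hε

theorem tendsto_mul_dslope_cobounded {f : ℂ → ℂ} {a : ℂ} (ha : Tendsto f (cobounded ℂ) (𝓝 a))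
    (z : ℂ) : Tendsto (fun ζ => ζ * dslope f z ζ) (cobounded ℂ) (𝓝 (a - f z)) := by
  have hlim : Tendsto (fun ζ => (1 - z * ζ⁻¹)⁻¹ * (f ζ - f z)) (cobounded ℂ)
      (𝓝 ((1 - z * 0)⁻¹ * (a - f z))) :=
    ((tendsto_const_nhds.sub (tendsto_const_nhds.mul tendsto_inv₀_cobounded)).inv₀
      (by simp)).mul (ha.sub_const _)
  rw [mul_zero, sub_zero, inv_one, one_mul] at hlim
  refine hlim.congr' ?_
  filter_upwards [tendsto_norm_cobounded_atTop.eventually_gt_atTop ‖z‖] with ζ hζ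
  have hζ0 : ζ ≠ 0 := norm_pos_iff.1 ((norm_nonneg z).trans_lt hζ)
  have hζz : ζ ≠ z := fun h => hζ.ne (h ▸ rfl)
  rw [dslope_of_ne _ hζz, slope_def_field]
  field_simp [sub_ne_zero.2 hζz]

theorem circleIntegral_div_sub_of_tendsto_cobounded {f : ℂ → ℂ} {R : ℝ} {a z : ℂ} (hR : 0 < R)
    (hf : DifferentiableOn ℂ f {ζ | R ≤ ‖ζ‖}) (ha : Tendsto f (cobounded ℂ) (𝓝 a))
    (hz : R < ‖z‖) :
    ∮ ζ in C(0, R), f ζ / (ζ - z) = 2 * π * I * (a - f z) := by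
  have hnhds : ∀ ζ : ℂ, R < ‖ζ‖ → {ζ : ℂ | R ≤ ‖ζ‖} ∈ 𝓝 ζ := fun ζ hζ =>
    (continuous_norm.tendsto ζ).eventually_const_le hζ
  set g := dslope f z
  have hg : DifferentiableOn ℂ g {ζ | R ≤ ‖ζ‖} := (differentiableOn_dslope (hnhds z hz)).2 hf
  have hsplit : EqOn (fun ζ => f ζ / (ζ - z)) (fun ζ => g ζ + f z * (ζ - z)⁻¹) (sphere 0 R) := by
    intro ζ hζ
    have hζz : ζ ≠ z := fun h => (mem_sphere_zero_iff_norm.1 hζ ▸ h ▸ hz).false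
    simp only [g]
    rw [dslope_of_ne _ hζz, slope_def_field]
    field_simp [sub_ne_zero.2 hζz]
    ring
  have hconst : ∀ ρ, R ≤ ρ → ∮ ζ in C(0, ρ), g ζ = ∮ ζ in C(0, R), g ζ := fun ρ hρ =>
    circleIntegral_eq_of_differentiable_on_annulus_off_countable hR hρ countable_empty
      (hg.continuousOn.mono fun ζ hζ => by simpa using hζ.2)
      fun ζ hζ => hg.differentiableAt <| hnhds ζ (by simpa using hζ.1.2)
  have hgR : CircleIntegrable g 0 R :=
    (hg.continuousOn.mono fun ζ hζ => (mem_sphere_zero_iff_norm.1 hζ).ge).circleIntegrable hR.le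
  have hinvR : CircleIntegrable (fun ζ => f z * (ζ - z)⁻¹) 0 R :=
    (circleIntegrable_sub_inv_iff.2 (.inr (by simp [abs_of_pos hR, hz.ne']))).const_mul _
  rw [circleIntegral.integral_congr hR.le hsplit, circleIntegral.integral_add hgR hinvR,
    circleIntegral.integral_const_mul, circleIntegral_sub_inv_eq_zero_of_lt_norm hR.le hz,
    mul_zero, add_zero]
  exact tendsto_nhds_unique
    (tendsto_const_nhds.congr' ((eventually_ge_atTop R).mono fun ρ hρ => (hconst ρ hρ).symm))
    (tendsto_circleIntegral_atTop_of_tendsto_mul hg.continuousOn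
      (tendsto_mul_dslope_cobounded ha z))

lemma eqOn_div_cpow_inv_two_mul_cpow_inv_two :
    EqOn (fun ζ : ℂ => ζ / ((ζ - 1) ^ (2⁻¹ : ℂ) * (ζ + 1) ^ (2⁻¹ : ℂ)))
      (fun ζ => ((1 - ζ⁻¹ ^ 2) ^ (2⁻¹ : ℂ))⁻¹) {ζ | 1 < ‖ζ‖} := fun ζ hζ => by
  have hζ0 : ζ ≠ 0 := norm_pos_iff.1 (one_pos.trans hζ)
  simp only
  rw [cpow_inv_two_sub_one_mul_cpow_inv_two_add_one hζ0 (re_one_sub_inv_sq_pos hζ),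
    div_mul_eq_div_div, div_self hζ0, one_div]

lemma differentiableOn_inv_cpow_inv_two_one_sub_inv_sq :
    DifferentiableOn ℂ (fun ζ : ℂ => ((1 - ζ⁻¹ ^ 2) ^ (2⁻¹ : ℂ))⁻¹) {ζ | 1 < ‖ζ‖} := fun ζ hζ => by
  have hζ0 : ζ ≠ 0 := norm_pos_iff.1 (one_pos.trans hζ)
  have hre := re_one_sub_inv_sq_pos hζ
  have hv : (1 - ζ⁻¹ ^ 2) ^ (2⁻¹ : ℂ) ≠ 0 := fun h =>
    (re_cpow_inv_two_pos hre).ne' (by rw [h, zero_re])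
  exact (((differentiableAt_const 1).sub ((differentiableAt_inv hζ0).pow 2)).cpow_const
    (.inl hre)).inv hv |>.differentiableWithinAt

lemma tendsto_inv_cpow_inv_two_one_sub_inv_sq :
    Tendsto (fun ζ : ℂ => ((1 - ζ⁻¹ ^ 2) ^ (2⁻¹ : ℂ))⁻¹) (cobounded ℂ) (𝓝 1) := by
  have h : Tendsto (fun ζ : ℂ => 1 - ζ⁻¹ ^ 2) (cobounded ℂ) (𝓝 (1 - 0 ^ 2)) :=
    tendsto_const_nhds.sub (tendsto_inv₀_cobounded.pow 2)
  have hc : ContinuousAt (fun w : ℂ => (w ^ (2⁻¹ : ℂ))⁻¹) 1 :=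
    (continuousAt_cpow_const one_mem_slitPlane).inv₀ (by simp)
  rw [zero_pow two_ne_zero, sub_zero] at h
  have := hc.tendsto.comp h
  rwa [one_cpow, inv_one] at this

theorem circle_integral_toda_cauchy_transform_general (z : ℂ)
    (R : ℝ) (hR1 : 1 < R) (hRz : R < ‖z‖) :
    (1 / (2 * Real.pi * Complex.I)) *
        (∮ ζ in C(0, R), ζ / ((ζ - 1) ^ (1 / 2 : ℂ) * (ζ + 1) ^ (1 / 2 : ℂ) * (ζ - z)))
      = 1 - z / ((z - 1) ^ (1 / 2 : ℂ) * (z + 1) ^ (1 / 2 : ℂ)) := by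
  have hR0 : 0 < R := one_pos.trans hR1
  have hu := eqOn_div_cpow_inv_two_mul_cpow_inv_two
  simp only [one_div]
  have hz : z / ((z - 1) ^ (2⁻¹ : ℂ) * (z + 1) ^ (2⁻¹ : ℂ)) = ((1 - z⁻¹ ^ 2) ^ (2⁻¹ : ℂ))⁻¹ :=
    hu (hR1.trans hRz)
  rw [circleIntegral.integral_congr hR0.le fun ζ hζ =>
      (div_mul_eq_div_div _ _ _).trans (congrArg (· / (ζ - z))
        (hu (hR1.trans_eq (mem_sphere_zero_iff_norm.1 hζ).symm))),
    circleIntegral_div_sub_of_tendsto_cobounded hR0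
      (differentiableOn_inv_cpow_inv_two_one_sub_inv_sq.mono fun ζ hζ => hR1.trans_le hζ)
      tendsto_inv_cpow_inv_two_one_sub_inv_sq hRz,
    hz]
  exact inv_mul_cancel_left₀ (by simp [Real.pi_ne_zero]) _

/-- for `z ∉ [-1,1]` and `1 < R < |z|`,
`(1/(2πi)) ∮_{|ζ|=R} ζ/((ζ-1)^{1/2}(ζ+1)^{1/2}(ζ-z)) dζ = 1 - z/((z-1)^{1/2}(z+1)^{1/2})`. -/
theorem circle_integral_toda_cauchy_transform (z : ℂ) (hz : z ∉ intervalCC)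
    (R : ℝ) (hR1 : 1 < R) (hRz : R < ‖z‖) :
    (1 / (2 * Real.pi * Complex.I)) *
        (∮ ζ in C(0, R), ζ / ((ζ - 1) ^ (1 / 2 : ℂ) * (ζ + 1) ^ (1 / 2 : ℂ) * (ζ - z)))
      = 1 - z / ((z - 1) ^ (1 / 2 : ℂ) * (z + 1) ^ (1 / 2 : ℂ)) :=
  circle_integral_toda_cauchy_transform_general z R hR1 hRz
end
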